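/- arXiv:1608.03505 — 14 statements merged into one kernel-verified Lean document; each statement's English description precedes it below -/
import Mathlib

section
/- If (L, [-,-], ε) is a Leibniz color algebra, then the trilinear bracket [x,y,z] := [x,[y,z]] makes L into a ternary Leibniz color algebra, i.e. it satisfies the ternary ε-Nambu identity [[x,y,z],t,u] = [x,y,[z,t,u]] + ε(z,t+u)[x,[y,t,u],z] + ε(y+z,t+u)[[x,t,u],y,z] for all homogeneous x,y,z,t,u. -/
theorem stmt0_general {K G A : Type*} [Field K] [AddCommGroup G] [AddCommGroup A] [Module K A]
    (𝒜 : G → Submodule K A) (ε : G → G → K)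
    (br : A →ₗ[K] A →ₗ[K] A)
    (hgr : ∀ a b : G, ∀ x ∈ 𝒜 a, ∀ y ∈ 𝒜 b, br x y ∈ 𝒜 (a + b))
    (hLeib : ∀ a b c : G, ∀ x ∈ 𝒜 a, ∀ y ∈ 𝒜 b, ∀ z ∈ 𝒜 c,
      br (br x y) z = br x (br y z) + ε b c • br (br x z) y) :
    ∀ a b c d e : G, ∀ x ∈ 𝒜 a, ∀ y ∈ 𝒜 b, ∀ z ∈ 𝒜 c, ∀ t ∈ 𝒜 d, ∀ u ∈ 𝒜 e,
      br (br x (br y z)) (br t u)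
        = br x (br y (br z (br t u)))
          + ε c (d + e) • br x (br (br y (br t u)) z)
          + ε (b + c) (d + e) • br (br x (br t u)) (br y z) := by
  intro a b c d e x hx y hy z hz t ht u hu
  have htu := hgr d e t ht u hu
  have outer := hLeib a (b + c) (d + e) x hx (br y z) (hgr b c y hy z hz) (br t u) htu
  have inner := hLeib b c (d + e) y hy z hz (br t u) htu
  rw [outer, inner, map_add, map_smul, add_assoc]

/-- A Leibniz color algebra gives a ternary Leibniz color algebra via
`[x,y,z] := [x,[y,z]]`. -/
theorem stmt0 {K G A : Type*} [Field K] [AddCommGroup G] [AddCommGroup A] [Module K A]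
    (𝒜 : G → Submodule K A) (ε : G → G → K)
    (hε1 : ∀ a b, ε a b * ε b a = 1)
    (hε2 : ∀ a b c, ε a (b + c) = ε a b * ε a c)
    (hε3 : ∀ a b c, ε (a + b) c = ε a c * ε b c)
    (br : A →ₗ[K] A →ₗ[K] A)
    (hgr : ∀ a b : G, ∀ x ∈ 𝒜 a, ∀ y ∈ 𝒜 b, br x y ∈ 𝒜 (a + b))
    (hLeib : ∀ a b c : G, ∀ x ∈ 𝒜 a, ∀ y ∈ 𝒜 b, ∀ z ∈ 𝒜 c,
      br (br x y) z = br x (br y z) + ε b c • br (br x z) y) :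
    ∀ a b c d e : G, ∀ x ∈ 𝒜 a, ∀ y ∈ 𝒜 b, ∀ z ∈ 𝒜 c, ∀ t ∈ 𝒜 d, ∀ u ∈ 𝒜 e,
      br (br x (br y z)) (br t u)
        = br x (br y (br z (br t u)))
          + ε c (d + e) • br x (br (br y (br t u)) z)
          + ε (b + c) (d + e) • br (br x (br t u)) (br y z) :=
  stmt0_general 𝒜 ε br hgr hLeib
end

section
/- If (L, [-,-], ε, R) is a Rota-Baxter Leibniz color algebra of weight λ, then L equipped with the new bracket [x,y]_λ := [R(x),y] + [x,R(y)] + λ[x,y] is again a Rota-Baxter Leibniz color algebra of weight λ with the same operator R. -/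
/-!
The operator `R` is a homomorphism from `[-,-]_λ` to `[-,-]`: the Rota–Baxter identity says
exactly `[R x, R y] = R [x, y]_λ`. Hence expanding `[[x,y]_λ, z]_λ` by bilinearity replaces every
inner `R [-,-]_λ` by an ordinary bracket, and the deformed Leibniz identity becomes a linear
combination of ordinary Leibniz identities for triples `(u, v, w)` with `u ∈ {x, R x}`,
`v ∈ {y, R y}`, `w ∈ {z, R z}`. These all have the same degrees as `(x, y, z)` because `R` is even,
so they carry the same sign `ε(b, c)`. The Rota–Baxter identity for `[-,-]_λ` is likewise three
instances of the one for `[-,-]`.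
-/

/-- The deformed bracket `[x,y]_λ := [R(x),y] + [x,R(y)] + λ[x,y]`. -/
def brLam {K A : Type*} [Field K] [AddCommGroup A] [Module K A]
    (br : A → A → A) (R : A → A) (lam : K) (x y : A) : A :=
  br (R x) y + br x (R y) + lam • br x y

open Set

section

variable {K A : Type*} [Field K] [AddCommGroup A] [Module K A]

def IsRotaBaxterOn (br : A → A → A) (R : A → A) (lam : K) (X Y : Set A) : Prop :=
  ∀ x ∈ X, ∀ y ∈ Y, br (R x) (R y) = R (brLam br R lam x y)

def IsLeibnizOn (br : A → A → A) (e : K) (X Y Z : Set A) : Prop :=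
  ∀ x ∈ X, ∀ y ∈ Y, ∀ z ∈ Z, br (br x y) z = br x (br y z) + e • br (br x z) y

theorem IsRotaBaxterOn.brLam {br : A → A → A} {R : A →ₗ[K] A} {lam : K} {X Y : Set A}
    (hX : MapsTo R X X) (hY : MapsTo R Y Y) (hRB : IsRotaBaxterOn br (fun u => R u) lam X Y) :
    IsRotaBaxterOn (brLam br (fun u => R u) lam) (fun u => R u) lam X Y := by
  intro x hx y hy
  simp only [_root_.brLam, hRB (R x) (hX hx) y hy, hRB x hx (R y) (hY hy), hRB x hx y hy,
    map_add, map_smul]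

theorem IsLeibnizOn.brLam {br : A →ₗ[K] A →ₗ[K] A} {R : A →ₗ[K] A} {lam e : K} {X Y Z : Set A}
    (hX : MapsTo R X X) (hY : MapsTo R Y Y) (hZ : MapsTo R Z Z)
    (hLeib : IsLeibnizOn (fun u v => br u v) e X Y Z)
    (hXY : IsRotaBaxterOn (fun u v => br u v) (fun u => R u) lam X Y)
    (hYZ : IsRotaBaxterOn (fun u v => br u v) (fun u => R u) lam Y Z)
    (hXZ : IsRotaBaxterOn (fun u v => br u v) (fun u => R u) lam X Z) :
    IsLeibnizOn (brLam (fun u v => br u v) (fun u => R u) lam) e X Y Z := by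
  intro x hx y hy z hz
  have hRx := hX hx
  have hRy := hY hy
  have hRz := hZ hz
  have hxy := hXY x hx y hy
  have hyz := hYZ y hy z hz
  have hxz := hXZ x hx z hz
  simp only [_root_.brLam] at hxy hyz hxz ⊢
  simp only [IsLeibnizOn] at hLeib
  rw [← hxy, ← hyz, ← hxz]
  simp only [map_add, map_smul, LinearMap.add_apply, LinearMap.smul_apply]
  rw [hLeib _ hRx _ hRy _ hz, hLeib _ hRx _ hy _ hRz, hLeib _ hx _ hRy _ hRz,
    hLeib _ hx _ hy _ hRz, hLeib _ hRx _ hy _ hz, hLeib _ hx _ hRy _ hz, hLeib _ hx _ hy _ hz]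
  module

end

theorem stmt3_general {K G A : Type*} [Field K] [AddCommGroup G] [AddCommGroup A] [Module K A]
    (𝒜 : G → Submodule K A) (ε : G → G → K)
    (br : A →ₗ[K] A →ₗ[K] A)
    (hLeib : ∀ a b c : G, ∀ x ∈ 𝒜 a, ∀ y ∈ 𝒜 b, ∀ z ∈ 𝒜 c,
      br (br x y) z = br x (br y z) + ε b c • br (br x z) y)
    (R : A →ₗ[K] A) (lam : K)
    (hReven : ∀ a : G, ∀ x ∈ 𝒜 a, R x ∈ 𝒜 a)
    (hRB : ∀ a b : G, ∀ x ∈ 𝒜 a, ∀ y ∈ 𝒜 b,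
      br (R x) (R y) = R (br (R x) y + br x (R y) + lam • br x y)) :
    (∀ a b c : G, ∀ x ∈ 𝒜 a, ∀ y ∈ 𝒜 b, ∀ z ∈ 𝒜 c,
      brLam (fun u v => br u v) (fun u => R u) lam
          (brLam (fun u v => br u v) (fun u => R u) lam x y) z
        = brLam (fun u v => br u v) (fun u => R u) lam x
            (brLam (fun u v => br u v) (fun u => R u) lam y z)
          + ε b c • brLam (fun u v => br u v) (fun u => R u) lam
              (brLam (fun u v => br u v) (fun u => R u) lam x z) y) ∧
    (∀ a b : G, ∀ x ∈ 𝒜 a, ∀ y ∈ 𝒜 b,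
      brLam (fun u v => br u v) (fun u => R u) lam (R x) (R y)
        = R (brLam (fun u v => br u v) (fun u => R u) lam (R x) y
            + brLam (fun u v => br u v) (fun u => R u) lam x (R y)
            + lam • brLam (fun u v => br u v) (fun u => R u) lam x y)) :=
  ⟨fun a b c => IsLeibnizOn.brLam (hReven a) (hReven b) (hReven c) (hLeib a b c)
      (hRB a b) (hRB b c) (hRB a c),
    fun a b => IsRotaBaxterOn.brLam (hReven a) (hReven b) (hRB a b)⟩

/-- A Rota-Baxter Leibniz color algebra of weight λ gives, via the
bracket `[x,y]_λ`, another Rota-Baxter Leibniz color algebra of weight λ with the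
same operator R. -/
theorem stmt3 {K G A : Type*} [Field K] [AddCommGroup G] [AddCommGroup A] [Module K A]
    (𝒜 : G → Submodule K A) (ε : G → G → K)
    (hε1 : ∀ a b, ε a b * ε b a = 1)
    (hε2 : ∀ a b c, ε a (b + c) = ε a b * ε a c)
    (hε3 : ∀ a b c, ε (a + b) c = ε a c * ε b c)
    (br : A →ₗ[K] A →ₗ[K] A)
    (hgr : ∀ a b : G, ∀ x ∈ 𝒜 a, ∀ y ∈ 𝒜 b, br x y ∈ 𝒜 (a + b))
    (hLeib : ∀ a b c : G, ∀ x ∈ 𝒜 a, ∀ y ∈ 𝒜 b, ∀ z ∈ 𝒜 c,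
      br (br x y) z = br x (br y z) + ε b c • br (br x z) y)
    (R : A →ₗ[K] A) (lam : K)
    (hReven : ∀ a : G, ∀ x ∈ 𝒜 a, R x ∈ 𝒜 a)
    (hRB : ∀ a b : G, ∀ x ∈ 𝒜 a, ∀ y ∈ 𝒜 b,
      br (R x) (R y) = R (br (R x) y + br x (R y) + lam • br x y)) :
    (∀ a b c : G, ∀ x ∈ 𝒜 a, ∀ y ∈ 𝒜 b, ∀ z ∈ 𝒜 c,
      brLam (fun u v => br u v) (fun u => R u) lam
          (brLam (fun u v => br u v) (fun u => R u) lam x y) z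
        = brLam (fun u v => br u v) (fun u => R u) lam x
            (brLam (fun u v => br u v) (fun u => R u) lam y z)
          + ε b c • brLam (fun u v => br u v) (fun u => R u) lam
              (brLam (fun u v => br u v) (fun u => R u) lam x z) y) ∧
    (∀ a b : G, ∀ x ∈ 𝒜 a, ∀ y ∈ 𝒜 b,
      brLam (fun u v => br u v) (fun u => R u) lam (R x) (R y)
        = R (brLam (fun u v => br u v) (fun u => R u) lam (R x) y
            + brLam (fun u v => br u v) (fun u => R u) lam x (R y)
            + lam • brLam (fun u v => br u v) (fun u => R u) lam x y)) :=
  stmt3_general 𝒜 ε br hLeib R lam hReven hRB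
end

section
/- If (L, [-,-], ε, R) is a Rota-Baxter Lie color algebra of weight 0, then the product x·y := [R(x), y] makes L into a left-symmetric color algebra. -/
/-!
Write `X = R x`, `Y = R y`. The Rota-Baxter identity together with ε-skew-symmetry gives
`R [X, y] = [X, Y] + ε(a,b) R [Y, x]`, and the ε-Jacobi identity, read as the statement that
`[X, -]` is an ε-derivation, gives `[[X, Y], z] = [X, [Y, z]] - ε(a,b) [Y, [X, z]]`.
Substituting both into `[R [X, y], z] - [X, [Y, z]]` leaves exactly
`ε(a,b) ([R [Y, x], z] - [Y, [X, z]])`.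
-/

section ColorLie

variable {K G A : Type*} [Field K] [AddCommGroup A] [Module K A]
  {𝒜 : G → Submodule K A} {ε : G → G → K} {br : A →ₗ[K] A →ₗ[K] A}

theorem color_bracket_bracket_left [AddCommGroup G]
    (hε1 : ∀ a b, ε a b * ε b a = 1)
    (hε2 : ∀ a b c, ε a (b + c) = ε a b * ε a c)
    (hgr : ∀ a b : G, ∀ x ∈ 𝒜 a, ∀ y ∈ 𝒜 b, br x y ∈ 𝒜 (a + b))
    (hskew : ∀ a b : G, ∀ x ∈ 𝒜 a, ∀ y ∈ 𝒜 b, br x y = -(ε a b • br y x))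
    (hjac : ∀ a b c : G, ∀ x ∈ 𝒜 a, ∀ y ∈ 𝒜 b, ∀ z ∈ 𝒜 c,
      ε c a • br x (br y z) + ε a b • br y (br z x) + ε b c • br z (br x y) = 0)
    {a b c : G} {x y z : A} (hx : x ∈ 𝒜 a) (hy : y ∈ 𝒜 b) (hz : z ∈ 𝒜 c) :
    br (br x y) z = br x (br y z) - ε a b • br y (br x z) := by
  have hca : ε c a ≠ 0 := left_ne_zero_of_mul_eq_one (hε1 c a)
  have hjac' := hjac a b c x hx y hy z hz
  rw [hskew c a z hz x hx, hskew c (a + b) z hz _ (hgr a b x hx y hy), hε2 c a b] at hjac'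
  have hcoeff : ε b c * (ε c a * ε c b) = ε c a := by
    linear_combination ε c a * hε1 b c
  simp only [map_neg, map_smul, smul_neg, smul_smul, hcoeff] at hjac'
  apply smul_right_injective A hca
  linear_combination (norm := module) -hjac'

theorem rotaBaxter_map_bracket
    (hskew : ∀ a b : G, ∀ x ∈ 𝒜 a, ∀ y ∈ 𝒜 b, br x y = -(ε a b • br y x))
    {R : A →ₗ[K] A} (hReven : ∀ a : G, ∀ x ∈ 𝒜 a, R x ∈ 𝒜 a)
    (hRB : ∀ a b : G, ∀ x ∈ 𝒜 a, ∀ y ∈ 𝒜 b,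
      br (R x) (R y) = R (br (R x) y + br x (R y)))
    {a b : G} {x y : A} (hx : x ∈ 𝒜 a) (hy : y ∈ 𝒜 b) :
    R (br (R x) y) = br (R x) (R y) + ε a b • R (br (R y) x) := by
  have hRB' := hRB a b x hx y hy
  rw [hskew a b x hx (R y) (hReven b y hy), map_add, map_neg, map_smul] at hRB'
  linear_combination (norm := module) -hRB'

end ColorLie

theorem stmt5_general {K G A : Type*} [Field K] [AddCommGroup G] [AddCommGroup A] [Module K A]
    (𝒜 : G → Submodule K A) (ε : G → G → K)
    (hε1 : ∀ a b, ε a b * ε b a = 1)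
    (hε2 : ∀ a b c, ε a (b + c) = ε a b * ε a c)
    (br : A →ₗ[K] A →ₗ[K] A)
    (hgr : ∀ a b : G, ∀ x ∈ 𝒜 a, ∀ y ∈ 𝒜 b, br x y ∈ 𝒜 (a + b))
    (hskew : ∀ a b : G, ∀ x ∈ 𝒜 a, ∀ y ∈ 𝒜 b, br x y = -(ε a b • br y x))
    (hjac : ∀ a b c : G, ∀ x ∈ 𝒜 a, ∀ y ∈ 𝒜 b, ∀ z ∈ 𝒜 c,
      ε c a • br x (br y z) + ε a b • br y (br z x) + ε b c • br z (br x y) = 0)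
    (R : A →ₗ[K] A)
    (hReven : ∀ a : G, ∀ x ∈ 𝒜 a, R x ∈ 𝒜 a)
    (hRB : ∀ a b : G, ∀ x ∈ 𝒜 a, ∀ y ∈ 𝒜 b,
      br (R x) (R y) = R (br (R x) y + br x (R y))) :
    ∀ a b c : G, ∀ x ∈ 𝒜 a, ∀ y ∈ 𝒜 b, ∀ z ∈ 𝒜 c,
      br (R (br (R x) y)) z - br (R x) (br (R y) z)
        = ε a b • (br (R (br (R y) x)) z - br (R y) (br (R x) z)) := by
  intro a b c x hx y hy z hz
  rw [rotaBaxter_map_bracket hskew hReven hRB hx hy, map_add, map_smul, LinearMap.add_apply,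
    LinearMap.smul_apply, color_bracket_bracket_left hε1 hε2 hgr hskew hjac
      (hReven a x hx) (hReven b y hy) hz]
  module

/-- A Rota-Baxter Lie color algebra of weight 0 gives a left-symmetric
color algebra via `x·y := [R(x), y]`. -/
theorem stmt5 {K G A : Type*} [Field K] [AddCommGroup G] [AddCommGroup A] [Module K A]
    (𝒜 : G → Submodule K A) (ε : G → G → K)
    (hε1 : ∀ a b, ε a b * ε b a = 1)
    (hε2 : ∀ a b c, ε a (b + c) = ε a b * ε a c)
    (hε3 : ∀ a b c, ε (a + b) c = ε a c * ε b c)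
    (br : A →ₗ[K] A →ₗ[K] A)
    (hgr : ∀ a b : G, ∀ x ∈ 𝒜 a, ∀ y ∈ 𝒜 b, br x y ∈ 𝒜 (a + b))
    (hskew : ∀ a b : G, ∀ x ∈ 𝒜 a, ∀ y ∈ 𝒜 b, br x y = -(ε a b • br y x))
    (hjac : ∀ a b c : G, ∀ x ∈ 𝒜 a, ∀ y ∈ 𝒜 b, ∀ z ∈ 𝒜 c,
      ε c a • br x (br y z) + ε a b • br y (br z x) + ε b c • br z (br x y) = 0)
    (R : A →ₗ[K] A)
    (hReven : ∀ a : G, ∀ x ∈ 𝒜 a, R x ∈ 𝒜 a)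
    (hRB : ∀ a b : G, ∀ x ∈ 𝒜 a, ∀ y ∈ 𝒜 b,
      br (R x) (R y) = R (br (R x) y + br x (R y))) :
    ∀ a b c : G, ∀ x ∈ 𝒜 a, ∀ y ∈ 𝒜 b, ∀ z ∈ 𝒜 c,
      br (R (br (R x) y)) z - br (R x) (br (R y) z)
        = ε a b • (br (R (br (R y) x)) z - br (R y) (br (R x) z)) :=
  stmt5_general 𝒜 ε hε1 hε2 br hgr hskew hjac R hReven hRB
end

section
/- If (A, ·, ε, R) is a Rota-Baxter left-symmetric color algebra of weight 0, then A equipped with the product x∗y := R(x)·y − ε(x,y) y·R(x) is again a Rota-Baxter left-symmetric color algebra of weight 0 with the same operator R. -/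
/-!
Write `[u, v] = u·v − ε(u,v) v·u` for the color commutator, so that `x∗y = [R x, y]`.
The commutator of a left-symmetric color algebra satisfies the color Jacobi identity, and a
Rota-Baxter operator for `·` is one for `[·,·]` as well. By ε-skew-symmetry of the commutator,
`x∗y − ε(x,y) y∗x = [R x, y] + [x, R y]`, which `R` maps to `[R x, R y]`; hence
`(x∗y)∗z − ε(x,y) (y∗x)∗z = [[R x, R y], z]`, and the left-symmetry of `∗` becomes the
Jacobi identity for `R x, R y, z`. The Rota-Baxter identity for `∗` is the one for `[·,·]`
applied to `R x` and `y`.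
-/

/-- The product `x∗y := R(x)·y − ε(x,y) y·R(x)`, where `a, b` are the degrees of the
homogeneous elements `x, y`. -/
def starRB {K G A : Type*} [Field K] [AddCommGroup A] [Module K A]
    (ε : G → G → K) (mul : A → A → A) (R : A → A) (a b : G) (x y : A) : A :=
  mul (R x) y - ε a b • mul y (R x)

def colorBracket {K G A : Type*} [CommRing K] [AddCommGroup A] [Module K A]
    (ε : G → G → K) (mul : A →ₗ[K] A →ₗ[K] A) (a b : G) : A →ₗ[K] A →ₗ[K] A :=
  mul - ε a b • mul.flip

section CommRing

variable {K G A : Type*} [CommRing K] [AddCommGroup A] [Module K A]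
  {ε : G → G → K} {mul : A →ₗ[K] A →ₗ[K] A}

theorem colorBracket_apply (a b : G) (x y : A) :
    colorBracket ε mul a b x y = mul x y - ε a b • mul y x :=
  rfl

theorem smul_colorBracket_swap {a b : G} (h : ε a b * ε b a = 1) (x y : A) :
    ε a b • colorBracket ε mul b a y x = -colorBracket ε mul a b x y := by
  simp only [colorBracket_apply]
  linear_combination (norm := module) (-h) • mul x y

theorem colorBracket_rotaBaxter (R : A →ₗ[K] A) {x y : A}
    (hxy : mul (R x) (R y) = R (mul (R x) y + mul x (R y)))
    (hyx : mul (R y) (R x) = R (mul (R y) x + mul y (R x))) (a b : G) :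
    colorBracket ε mul a b (R x) (R y)
      = R (colorBracket ε mul a b (R x) y + colorBracket ε mul a b x (R y)) := by
  simp only [colorBracket_apply, map_add, map_sub, map_smul] at hxy hyx ⊢
  linear_combination (norm := module) hxy - ε a b • hyx

theorem colorBracket_jacobi [AddCommGroup G] (𝒜 : G → Submodule K A)
    (hε1 : ∀ a b, ε a b * ε b a = 1)
    (hε2 : ∀ a b c, ε a (b + c) = ε a b * ε a c)
    (hε3 : ∀ a b c, ε (a + b) c = ε a c * ε b c)
    (hls : ∀ a b c : G, ∀ x ∈ 𝒜 a, ∀ y ∈ 𝒜 b, ∀ z ∈ 𝒜 c,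
      mul (mul x y) z - mul x (mul y z)
        = ε a b • (mul (mul y x) z - mul y (mul x z)))
    {a b c : G} {x y z : A} (hx : x ∈ 𝒜 a) (hy : y ∈ 𝒜 b) (hz : z ∈ 𝒜 c) :
    colorBracket ε mul (a + b) c (colorBracket ε mul a b x y) z =
      colorBracket ε mul a (b + c) x (colorBracket ε mul b c y z) -
        ε a b • colorBracket ε mul b (a + c) y (colorBracket ε mul a c x z) := by
  have hxyz := hls a b c x hx y hy z hz
  have hxzy := hls a c b x hx z hz y hy
  have hyzx := hls b c a y hy z hz x hx
  simp only [colorBracket_apply, map_sub, map_smul, LinearMap.sub_apply, LinearMap.smul_apply,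
    hε2, hε3]
  linear_combination (norm := module) hxyz - ε b c • hxzy + (ε a b * ε a c) • hyzx
    + hε1 a b • (ε b c • (ε a c • mul (mul z x) y - mul (mul x z) y))

end CommRing

theorem starRB_eq_colorBracket {K G A : Type*} [Field K] [AddCommGroup A] [Module K A]
    (ε : G → G → K) (mul : A →ₗ[K] A →ₗ[K] A) (R : A →ₗ[K] A) (a b : G) (x y : A) :
    starRB ε (fun u v => mul u v) (fun u => R u) a b x y = colorBracket ε mul a b (R x) y :=
  rfl

theorem stmt6_general {K G A : Type*} [Field K] [AddCommGroup G] [AddCommGroup A] [Module K A]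
    (𝒜 : G → Submodule K A) (ε : G → G → K)
    (hε1 : ∀ a b, ε a b * ε b a = 1)
    (hε2 : ∀ a b c, ε a (b + c) = ε a b * ε a c)
    (hε3 : ∀ a b c, ε (a + b) c = ε a c * ε b c)
    (mul : A →ₗ[K] A →ₗ[K] A)
    (hls : ∀ a b c : G, ∀ x ∈ 𝒜 a, ∀ y ∈ 𝒜 b, ∀ z ∈ 𝒜 c,
      mul (mul x y) z - mul x (mul y z)
        = ε a b • (mul (mul y x) z - mul y (mul x z)))
    (R : A →ₗ[K] A)
    (hReven : ∀ a : G, ∀ x ∈ 𝒜 a, R x ∈ 𝒜 a)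
    (hRB : ∀ a b : G, ∀ x ∈ 𝒜 a, ∀ y ∈ 𝒜 b,
      mul (R x) (R y) = R (mul (R x) y + mul x (R y))) :
    (∀ a b c : G, ∀ x ∈ 𝒜 a, ∀ y ∈ 𝒜 b, ∀ z ∈ 𝒜 c,
      starRB ε (fun u v => mul u v) (fun u => R u) (a + b) c
          (starRB ε (fun u v => mul u v) (fun u => R u) a b x y) z
        - starRB ε (fun u v => mul u v) (fun u => R u) a (b + c) x
            (starRB ε (fun u v => mul u v) (fun u => R u) b c y z)
        = ε a b • (starRB ε (fun u v => mul u v) (fun u => R u) (b + a) c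
              (starRB ε (fun u v => mul u v) (fun u => R u) b a y x) z
            - starRB ε (fun u v => mul u v) (fun u => R u) b (a + c) y
                (starRB ε (fun u v => mul u v) (fun u => R u) a c x z))) ∧
    (∀ a b : G, ∀ x ∈ 𝒜 a, ∀ y ∈ 𝒜 b,
      starRB ε (fun u v => mul u v) (fun u => R u) a b (R x) (R y)
        = R (starRB ε (fun u v => mul u v) (fun u => R u) a b (R x) y
            + starRB ε (fun u v => mul u v) (fun u => R u) a b x (R y))) := by
  refine ⟨fun a b c x hx y hy z hz => ?_, fun a b x hx y hy => ?_⟩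
  · have hRxRy : R (colorBracket ε mul a b (R x) y) - ε a b • R (colorBracket ε mul b a (R y) x)
        = colorBracket ε mul a b (R x) (R y) := by
      rw [← map_smul, ← map_sub, smul_colorBracket_swap (hε1 a b), sub_neg_eq_add,
        colorBracket_rotaBaxter R (hRB a b x hx y hy) (hRB b a y hy x hx)]
    have hjacobi := colorBracket_jacobi 𝒜 hε1 hε2 hε3 hls (hReven a x hx) (hReven b y hy) hz
    rw [← hRxRy, map_sub, map_smul, LinearMap.sub_apply, LinearMap.smul_apply] at hjacobi
    simp only [starRB_eq_colorBracket, add_comm b a]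
    linear_combination (norm := module) hjacobi
  · have hRx := hReven a x hx
    exact colorBracket_rotaBaxter R (hRB a b (R x) hRx y hy) (hRB b a y hy (R x) hRx) a b

/-- A Rota-Baxter left-symmetric color algebra of weight 0 gives, via
`x∗y := R(x)·y − ε(x,y) y·R(x)`, another Rota-Baxter left-symmetric color algebra of
weight 0 with the same operator R. -/
theorem stmt6 {K G A : Type*} [Field K] [AddCommGroup G] [AddCommGroup A] [Module K A]
    (𝒜 : G → Submodule K A) (ε : G → G → K)
    (hε1 : ∀ a b, ε a b * ε b a = 1)
    (hε2 : ∀ a b c, ε a (b + c) = ε a b * ε a c)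
    (hε3 : ∀ a b c, ε (a + b) c = ε a c * ε b c)
    (mul : A →ₗ[K] A →ₗ[K] A)
    (hgr : ∀ a b : G, ∀ x ∈ 𝒜 a, ∀ y ∈ 𝒜 b, mul x y ∈ 𝒜 (a + b))
    (hls : ∀ a b c : G, ∀ x ∈ 𝒜 a, ∀ y ∈ 𝒜 b, ∀ z ∈ 𝒜 c,
      mul (mul x y) z - mul x (mul y z)
        = ε a b • (mul (mul y x) z - mul y (mul x z)))
    (R : A →ₗ[K] A)
    (hReven : ∀ a : G, ∀ x ∈ 𝒜 a, R x ∈ 𝒜 a)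
    (hRB : ∀ a b : G, ∀ x ∈ 𝒜 a, ∀ y ∈ 𝒜 b,
      mul (R x) (R y) = R (mul (R x) y + mul x (R y))) :
    (∀ a b c : G, ∀ x ∈ 𝒜 a, ∀ y ∈ 𝒜 b, ∀ z ∈ 𝒜 c,
      starRB ε (fun u v => mul u v) (fun u => R u) (a + b) c
          (starRB ε (fun u v => mul u v) (fun u => R u) a b x y) z
        - starRB ε (fun u v => mul u v) (fun u => R u) a (b + c) x
            (starRB ε (fun u v => mul u v) (fun u => R u) b c y z)
        = ε a b • (starRB ε (fun u v => mul u v) (fun u => R u) (b + a) c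
              (starRB ε (fun u v => mul u v) (fun u => R u) b a y x) z
            - starRB ε (fun u v => mul u v) (fun u => R u) b (a + c) y
                (starRB ε (fun u v => mul u v) (fun u => R u) a c x z))) ∧
    (∀ a b : G, ∀ x ∈ 𝒜 a, ∀ y ∈ 𝒜 b,
      starRB ε (fun u v => mul u v) (fun u => R u) a b (R x) (R y)
        = R (starRB ε (fun u v => mul u v) (fun u => R u) a b (R x) y
            + starRB ε (fun u v => mul u v) (fun u => R u) a b x (R y))) :=
  stmt6_general 𝒜 ε hε1 hε2 hε3 mul hls R hReven hRB
end

section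
/- If (A, ·, ε, R) is a Rota-Baxter associative color algebra of weight −1, then the product x∗y := R(x)·y − ε(x,y) y·R(x) − x·y makes A into a left-symmetric color algebra. -/
/-!
Write `P = R - id`, so that `x ∗ y = P(x)·y - ε(x,y) y·R(x)`: left multiplication by `x`
in `(A, ∗)` is the twisted action `z ↦ P(x)·z - ε(x,z) z·R(x)`. By associativity, the
ε-commutator of the actions of `x` and `y` is the twisted action of the pair
`(P(x)P(y) - ε P(y)P(x), R(x)R(y) - ε R(y)R(x))`, the mixed terms cancelling since
`ε(x,y) ε(y,x) = 1`. The Rota-Baxter identity says that both `R` and `P` carry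
`x ·_R y = R(x)·y + x·R(y) - x·y` to the product, and `x ∗ y - ε y ∗ x = x ·_R y - ε y ·_R x`;
so this commutator is the action of `x ∗ y - ε y ∗ x`, which is left-symmetry.
-/

/-- The product `x∗y := R(x)·y − ε(x,y) y·R(x) − x·y`, where `a, b` are the degrees of
the homogeneous elements `x, y`. -/
def astRB {K G A : Type*} [Field K] [AddCommGroup A] [Module K A]
    (ε : G → G → K) (mul : A → A → A) (R : A → A) (a b : G) (x y : A) : A :=
  mul (R x) y - ε a b • mul y (R x) - mul x y

section TwistedAct

variable {K A : Type*} [CommRing K] [AddCommGroup A] [Module K A]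
  (mul : A →ₗ[K] A →ₗ[K] A)

def twistedAct (s : K) (p r z : A) : A := mul p z - s • mul z r

variable {G : Type*} (𝒜 : G → Submodule K A) {ε : G → G → K} {mul}

theorem twistedAct_twistedAct_sub_smul_twistedAct_twistedAct
    (hassoc : ∀ a b c : G, ∀ x ∈ 𝒜 a, ∀ y ∈ 𝒜 b, ∀ z ∈ 𝒜 c,
      mul (mul x y) z = mul x (mul y z))
    {a b c : G} (hab : ε a b * ε b a = 1) {p r q t z : A}
    (hp : p ∈ 𝒜 a) (hr : r ∈ 𝒜 a) (hq : q ∈ 𝒜 b) (ht : t ∈ 𝒜 b) (hz : z ∈ 𝒜 c) :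
    twistedAct mul (ε a b * ε a c) p r (twistedAct mul (ε b c) q t z)
        - ε a b • twistedAct mul (ε b a * ε b c) q t (twistedAct mul (ε a c) p r z)
      = twistedAct mul (ε a c * ε b c) (mul p q - ε a b • mul q p)
          (mul r t - ε a b • mul t r) z := by
  simp only [twistedAct, map_sub, map_smul, LinearMap.sub_apply, LinearMap.smul_apply]
  rw [hassoc a b c p hp q hq z hz, hassoc b a c q hq p hp z hz, hassoc b c a q hq z hz r hr,
    hassoc c b a z hz t ht r hr, hassoc a c b p hp z hz t ht, hassoc c a b z hz r hr t ht]
  linear_combination (norm := module)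
    -(ε a c * ε b c) • hab • mul z (mul r t) + ε b c • hab • mul p (mul z t)

end TwistedAct

section RotaBaxter

variable {K A : Type*} [CommRing K] [AddCommGroup A] [Module K A]
  (mul : A →ₗ[K] A →ₗ[K] A) (R : A →ₗ[K] A)

def rbProd (x y : A) : A := mul (R x) y + mul x (R y) - mul x y

variable {mul R}

theorem mul_sub_self_mul_sub_self {x y : A}
    (hRB : mul (R x) (R y) = R (mul (R x) y + mul x (R y) - mul x y)) :
    mul (R x - x) (R y - y) = R (rbProd mul R x y) - rbProd mul R x y := by
  rw [rbProd, ← hRB]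
  simp only [map_sub, LinearMap.sub_apply]
  abel

end RotaBaxter

section LeftSymmetric

variable {K G A : Type*} [Field K] [AddCommGroup A] [Module K A]
  {ε : G → G → K} {mul : A →ₗ[K] A →ₗ[K] A} {R : A →ₗ[K] A}

local notation:75 x:76 " ∗[" a ", " b "] " y:76 => astRB ε (fun u v => mul u v) (fun u => R u) a b x y

theorem astRB_eq_twistedAct (a b : G) (x y : A) :
    x ∗[a, b] y = twistedAct mul (ε a b) (R x - x) (R x) y := by
  simp only [astRB, twistedAct, map_sub, LinearMap.sub_apply]
  abel

theorem sub_smul_astRB (a b : G) (s : K) (x x' y : A) :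
    (x - s • x') ∗[a, b] y = x ∗[a, b] y - s • x' ∗[a, b] y := by
  simp only [astRB, map_sub, map_smul, LinearMap.sub_apply, LinearMap.smul_apply]
  module

theorem astRB_sub_smul_astRB {a b : G} (hab : ε a b * ε b a = 1) (x y : A) :
    x ∗[a, b] y - ε a b • y ∗[b, a] x = rbProd mul R x y - ε a b • rbProd mul R y x := by
  simp only [astRB, rbProd]
  linear_combination (norm := module) hab • mul x (R y)

theorem astRB_astRB_sub_smul_astRB_astRB [Add G] (𝒜 : G → Submodule K A)
    (hε2 : ∀ a b c, ε a (b + c) = ε a b * ε a c)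
    (hε3 : ∀ a b c, ε (a + b) c = ε a c * ε b c)
    (hassoc : ∀ a b c : G, ∀ x ∈ 𝒜 a, ∀ y ∈ 𝒜 b, ∀ z ∈ 𝒜 c,
      mul (mul x y) z = mul x (mul y z))
    (hReven : ∀ a : G, ∀ x ∈ 𝒜 a, R x ∈ 𝒜 a)
    (hRB : ∀ a b : G, ∀ x ∈ 𝒜 a, ∀ y ∈ 𝒜 b,
      mul (R x) (R y) = R (mul (R x) y + mul x (R y) - mul x y))
    {a b c : G} (hab : ε a b * ε b a = 1) {x y z : A}
    (hx : x ∈ 𝒜 a) (hy : y ∈ 𝒜 b) (hz : z ∈ 𝒜 c) :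
    x ∗[a, b + c] (y ∗[b, c] z) - ε a b • y ∗[b, a + c] (x ∗[a, c] z)
      = (x ∗[a, b] y - ε a b • y ∗[b, a] x) ∗[a + b, c] z := by
  have hRx := hReven a x hx
  have hRy := hReven b y hy
  have hP : R (rbProd mul R x y - ε a b • rbProd mul R y x)
        - (rbProd mul R x y - ε a b • rbProd mul R y x)
      = mul (R x - x) (R y - y) - ε a b • mul (R y - y) (R x - x) := by
    rw [mul_sub_self_mul_sub_self (hRB a b x hx y hy),
      mul_sub_self_mul_sub_self (hRB b a y hy x hx), map_sub, map_smul]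
    module
  have hR : R (rbProd mul R x y - ε a b • rbProd mul R y x)
      = mul (R x) (R y) - ε a b • mul (R y) (R x) := by
    rw [hRB a b x hx y hy, hRB b a y hy x hx, map_sub, map_smul, rbProd, rbProd]
  rw [astRB_sub_smul_astRB hab, astRB_eq_twistedAct (a + b), hP, hR]
  simp only [astRB_eq_twistedAct, hε2, hε3]
  exact twistedAct_twistedAct_sub_smul_twistedAct_twistedAct 𝒜 hassoc hab (sub_mem hRx hx) hRx
    (sub_mem hRy hy) hRy hz

end LeftSymmetric

theorem stmt7_general {K G A : Type*} [Field K] [AddCommGroup G] [AddCommGroup A] [Module K A]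
    (𝒜 : G → Submodule K A) (ε : G → G → K)
    (hε1 : ∀ a b, ε a b * ε b a = 1)
    (hε2 : ∀ a b c, ε a (b + c) = ε a b * ε a c)
    (hε3 : ∀ a b c, ε (a + b) c = ε a c * ε b c)
    (mul : A →ₗ[K] A →ₗ[K] A)
    (hassoc : ∀ a b c : G, ∀ x ∈ 𝒜 a, ∀ y ∈ 𝒜 b, ∀ z ∈ 𝒜 c,
      mul (mul x y) z = mul x (mul y z))
    (R : A →ₗ[K] A)
    (hReven : ∀ a : G, ∀ x ∈ 𝒜 a, R x ∈ 𝒜 a)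
    (hRB : ∀ a b : G, ∀ x ∈ 𝒜 a, ∀ y ∈ 𝒜 b,
      mul (R x) (R y) = R (mul (R x) y + mul x (R y) - mul x y)) :
    ∀ a b c : G, ∀ x ∈ 𝒜 a, ∀ y ∈ 𝒜 b, ∀ z ∈ 𝒜 c,
      astRB ε (fun u v => mul u v) (fun u => R u) (a + b) c
          (astRB ε (fun u v => mul u v) (fun u => R u) a b x y) z
        - astRB ε (fun u v => mul u v) (fun u => R u) a (b + c) x
            (astRB ε (fun u v => mul u v) (fun u => R u) b c y z)
        = ε a b • (astRB ε (fun u v => mul u v) (fun u => R u) (b + a) c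
              (astRB ε (fun u v => mul u v) (fun u => R u) b a y x) z
            - astRB ε (fun u v => mul u v) (fun u => R u) b (a + c) y
                (astRB ε (fun u v => mul u v) (fun u => R u) a c x z)) := by
  intro a b c x hx y hy z hz
  have key := astRB_astRB_sub_smul_astRB_astRB 𝒜 hε2 hε3 hassoc hReven hRB (hε1 a b) hx hy hz
  rw [sub_smul_astRB] at key
  rw [add_comm b a]
  linear_combination (norm := module) -key

/-- A Rota-Baxter associative color algebra of weight −1 gives a
left-symmetric color algebra via `x∗y := R(x)·y − ε(x,y) y·R(x) − x·y`. -/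
theorem stmt7 {K G A : Type*} [Field K] [AddCommGroup G] [AddCommGroup A] [Module K A]
    (𝒜 : G → Submodule K A) (ε : G → G → K)
    (hε1 : ∀ a b, ε a b * ε b a = 1)
    (hε2 : ∀ a b c, ε a (b + c) = ε a b * ε a c)
    (hε3 : ∀ a b c, ε (a + b) c = ε a c * ε b c)
    (mul : A →ₗ[K] A →ₗ[K] A)
    (hgr : ∀ a b : G, ∀ x ∈ 𝒜 a, ∀ y ∈ 𝒜 b, mul x y ∈ 𝒜 (a + b))
    (hassoc : ∀ a b c : G, ∀ x ∈ 𝒜 a, ∀ y ∈ 𝒜 b, ∀ z ∈ 𝒜 c,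
      mul (mul x y) z = mul x (mul y z))
    (R : A →ₗ[K] A)
    (hReven : ∀ a : G, ∀ x ∈ 𝒜 a, R x ∈ 𝒜 a)
    (hRB : ∀ a b : G, ∀ x ∈ 𝒜 a, ∀ y ∈ 𝒜 b,
      mul (R x) (R y) = R (mul (R x) y + mul x (R y) - mul x y)) :
    ∀ a b c : G, ∀ x ∈ 𝒜 a, ∀ y ∈ 𝒜 b, ∀ z ∈ 𝒜 c,
      astRB ε (fun u v => mul u v) (fun u => R u) (a + b) c
          (astRB ε (fun u v => mul u v) (fun u => R u) a b x y) z
        - astRB ε (fun u v => mul u v) (fun u => R u) a (b + c) x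
            (astRB ε (fun u v => mul u v) (fun u => R u) b c y z)
        = ε a b • (astRB ε (fun u v => mul u v) (fun u => R u) (b + a) c
              (astRB ε (fun u v => mul u v) (fun u => R u) b a y x) z
            - astRB ε (fun u v => mul u v) (fun u => R u) b (a + c) y
                (astRB ε (fun u v => mul u v) (fun u => R u) a c x z)) :=
  stmt7_general 𝒜 ε hε1 hε2 hε3 mul hassoc R hReven hRB
end

section
/- If (S, ⊣, ⊢, ε) is a left-symmetric color dialgebra, then the bracket [x,y] := x⊣y − ε(x,y) y⊢x makes S into a Leibniz color algebra. -/
/-!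
Expanding both sides of the Leibniz identity for homogeneous `x, y, z` of degrees `a, b, c`
and using the first two dialgebra axioms to replace `x⊣(z⊢y)` by `x⊣(z⊣y)` and `(y⊣z)⊢x` by
`(y⊢z)⊢x`, the Leibniz defect becomes the combination
`h3(x,y,z) - ε(b,c) h3(x,z,y) + ε(a,b) ε(a,c) h4(y,z,x)` of the two left-symmetry defects,
once the bicharacter identities are used to match coefficients; skew-symmetry
`ε(b,c) ε(c,b) = 1` is needed exactly for the terms `y⊢(x⊣z)` and `y⊢(z⊢x)`.
-/

/-- The bracket `[x,y] := x⊣y − ε(x,y) y⊢x`, where `a, b` are the degrees of the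
homogeneous elements `x, y`. -/
def diBr {K G A : Type*} [Field K] [AddCommGroup A] [Module K A]
    (ε : G → G → K) (dl dr : A → A → A) (a b : G) (x y : A) : A :=
  dl x y - ε a b • dr y x

theorem diBr_leibniz {K G A : Type*} [Field K] [AddCommGroup G] [AddCommGroup A] [Module K A]
    {ε : G → G → K} (hε1 : ∀ a b, ε a b * ε b a = 1)
    (hε2 : ∀ a b c, ε a (b + c) = ε a b * ε a c)
    (hε3 : ∀ a b c, ε (a + b) c = ε a c * ε b c)
    (dl dr : A →ₗ[K] A →ₗ[K] A) {a b c : G} {x y z : A}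
    (h1 : dl x (dl z y) = dl x (dr z y))
    (h2 : dr (dr y z) x = dr (dl y z) x)
    (h3xyz : dl x (dl y z) - dl (dl x y) z = ε a b • (dr y (dl x z) - dl (dr y x) z))
    (h3xzy : dl x (dl z y) - dl (dl x z) y = ε a c • (dr z (dl x y) - dl (dr z x) y))
    (h4yzx : dr y (dr z x) - dr (dr y z) x = ε b c • (dr z (dr y x) - dr (dr z y) x)) :
    diBr ε (fun u v => dl u v) (fun u v => dr u v) (a + b) c
        (diBr ε (fun u v => dl u v) (fun u v => dr u v) a b x y) z
      = diBr ε (fun u v => dl u v) (fun u v => dr u v) a (b + c) x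
          (diBr ε (fun u v => dl u v) (fun u v => dr u v) b c y z)
        + ε b c • diBr ε (fun u v => dl u v) (fun u v => dr u v) (a + c) b
            (diBr ε (fun u v => dl u v) (fun u v => dr u v) a c x z) y := by
  simp only [diBr, map_sub, map_smul, LinearMap.sub_apply, LinearMap.smul_apply, hε2, hε3]
  rw [← h1, ← h2]
  linear_combination (norm := module) -h3xyz + ε b c • h3xzy - (ε a b * ε a c) • h4yzx
    + hε1 b c • (ε a b • dr y (dl x z) - (ε a b * ε a c) • dr y (dr z x))

theorem stmt8_general {K G A : Type*} [Field K] [AddCommGroup G] [AddCommGroup A] [Module K A]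
    (𝒜 : G → Submodule K A) (ε : G → G → K)
    (hε1 : ∀ a b, ε a b * ε b a = 1)
    (hε2 : ∀ a b c, ε a (b + c) = ε a b * ε a c)
    (hε3 : ∀ a b c, ε (a + b) c = ε a c * ε b c)
    (dl dr : A →ₗ[K] A →ₗ[K] A)
    (h1 : ∀ a b c : G, ∀ x ∈ 𝒜 a, ∀ y ∈ 𝒜 b, ∀ z ∈ 𝒜 c,
      dl x (dl y z) = dl x (dr y z))
    (h2 : ∀ a b c : G, ∀ x ∈ 𝒜 a, ∀ y ∈ 𝒜 b, ∀ z ∈ 𝒜 c,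
      dr (dr x y) z = dr (dl x y) z)
    (h3 : ∀ a b c : G, ∀ x ∈ 𝒜 a, ∀ y ∈ 𝒜 b, ∀ z ∈ 𝒜 c,
      dl x (dl y z) - dl (dl x y) z
        = ε a b • (dr y (dl x z) - dl (dr y x) z))
    (h4 : ∀ a b c : G, ∀ x ∈ 𝒜 a, ∀ y ∈ 𝒜 b, ∀ z ∈ 𝒜 c,
      dr x (dr y z) - dr (dr x y) z
        = ε a b • (dr y (dr x z) - dr (dr y x) z)) :
    ∀ a b c : G, ∀ x ∈ 𝒜 a, ∀ y ∈ 𝒜 b, ∀ z ∈ 𝒜 c,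
      diBr ε (fun u v => dl u v) (fun u v => dr u v) (a + b) c
          (diBr ε (fun u v => dl u v) (fun u v => dr u v) a b x y) z
        = diBr ε (fun u v => dl u v) (fun u v => dr u v) a (b + c) x
            (diBr ε (fun u v => dl u v) (fun u v => dr u v) b c y z)
          + ε b c • diBr ε (fun u v => dl u v) (fun u v => dr u v) (a + c) b
              (diBr ε (fun u v => dl u v) (fun u v => dr u v) a c x z) y := by
  intro a b c x hx y hy z hz
  exact diBr_leibniz hε1 hε2 hε3 dl dr (h1 a c b x hx z hz y hy) (h2 b c a y hy z hz x hx)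
    (h3 a b c x hx y hy z hz) (h3 a c b x hx z hz y hy) (h4 b c a y hy z hz x hx)

/-- A left-symmetric color dialgebra gives a Leibniz color algebra via
`[x,y] := x⊣y − ε(x,y) y⊢x`. -/
theorem stmt8 {K G A : Type*} [Field K] [AddCommGroup G] [AddCommGroup A] [Module K A]
    (𝒜 : G → Submodule K A) (ε : G → G → K)
    (hε1 : ∀ a b, ε a b * ε b a = 1)
    (hε2 : ∀ a b c, ε a (b + c) = ε a b * ε a c)
    (hε3 : ∀ a b c, ε (a + b) c = ε a c * ε b c)
    (dl dr : A →ₗ[K] A →ₗ[K] A)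
    (hgrl : ∀ a b : G, ∀ x ∈ 𝒜 a, ∀ y ∈ 𝒜 b, dl x y ∈ 𝒜 (a + b))
    (hgrr : ∀ a b : G, ∀ x ∈ 𝒜 a, ∀ y ∈ 𝒜 b, dr x y ∈ 𝒜 (a + b))
    (h1 : ∀ a b c : G, ∀ x ∈ 𝒜 a, ∀ y ∈ 𝒜 b, ∀ z ∈ 𝒜 c,
      dl x (dl y z) = dl x (dr y z))
    (h2 : ∀ a b c : G, ∀ x ∈ 𝒜 a, ∀ y ∈ 𝒜 b, ∀ z ∈ 𝒜 c,
      dr (dr x y) z = dr (dl x y) z)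
    (h3 : ∀ a b c : G, ∀ x ∈ 𝒜 a, ∀ y ∈ 𝒜 b, ∀ z ∈ 𝒜 c,
      dl x (dl y z) - dl (dl x y) z
        = ε a b • (dr y (dl x z) - dl (dr y x) z))
    (h4 : ∀ a b c : G, ∀ x ∈ 𝒜 a, ∀ y ∈ 𝒜 b, ∀ z ∈ 𝒜 c,
      dr x (dr y z) - dr (dr x y) z
        = ε a b • (dr y (dr x z) - dr (dr y x) z)) :
    ∀ a b c : G, ∀ x ∈ 𝒜 a, ∀ y ∈ 𝒜 b, ∀ z ∈ 𝒜 c,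
      diBr ε (fun u v => dl u v) (fun u v => dr u v) (a + b) c
          (diBr ε (fun u v => dl u v) (fun u v => dr u v) a b x y) z
        = diBr ε (fun u v => dl u v) (fun u v => dr u v) a (b + c) x
            (diBr ε (fun u v => dl u v) (fun u v => dr u v) b c y z)
          + ε b c • diBr ε (fun u v => dl u v) (fun u v => dr u v) (a + c) b
              (diBr ε (fun u v => dl u v) (fun u v => dr u v) a c x z) y :=
  stmt8_general 𝒜 ε hε1 hε2 hε3 dl dr h1 h2 h3 h4
end

section
/- If (D, ⊣, ⊢, ε) is an associative color dialgebra, then the bracket [x,y] := x⊣y − ε(x,y) y⊢x makes D into a Leibniz color algebra. -/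
structure IsSkewBicharacter {K G : Type*} [CommMonoid K] [Add G] (ε : G → G → K) : Prop where
  mul_swap_eq_one : ∀ a b, ε a b * ε b a = 1
  map_add_right : ∀ a b c, ε a (b + c) = ε a b * ε a c
  map_add_left : ∀ a b c, ε (a + b) c = ε a c * ε b c

namespace IsSkewBicharacter

variable {K G : Type*} [CommMonoid K] [Add G] {ε : G → G → K}

theorem mul_eq_map_add_left (hε : IsSkewBicharacter ε) (a b c : G) :
    ε b c * ε a c = ε (a + b) c := by
  rw [hε.map_add_left, mul_comm]

theorem mul_map_add_left_swap (hε : IsSkewBicharacter ε) (a b c : G) :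
    ε b c * ε (a + c) b = ε a b := by
  rw [hε.map_add_left, mul_left_comm, hε.mul_swap_eq_one, mul_one]

theorem mul_map_add_left_swap_mul (hε : IsSkewBicharacter ε) (a b c : G) :
    ε b c * (ε (a + c) b * ε a c) = ε a (b + c) := by
  rw [← mul_assoc, hε.mul_map_add_left_swap, hε.map_add_right]

theorem map_add_left_mul_eq_map_add_right_mul (hε : IsSkewBicharacter ε) (a b c : G) :
    ε (a + b) c * ε a b = ε a (b + c) * ε b c := by
  rw [hε.map_add_left, hε.map_add_right]
  ac_rfl

end IsSkewBicharacter

section Leibniz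

variable {K G A : Type*} [Field K] [AddCommGroup A] [Module K A]
  (ε : G → G → K) (dl dr : A →ₗ[K] A →ₗ[K] A)

theorem diBr_diBr_left (a b d c : G) (x y z : A) :
    diBr ε (fun u v => dl u v) (fun u v => dr u v) d c
        (diBr ε (fun u v => dl u v) (fun u v => dr u v) a b x y) z
      = dl (dl x y) z - ε a b • dl (dr y x) z - ε d c • dr z (dl x y)
        + (ε d c * ε a b) • dr z (dr y x) := by
  simp only [diBr, map_sub, map_smul, LinearMap.sub_apply, LinearMap.smul_apply, smul_sub,
    smul_smul]
  abel

theorem diBr_diBr_right (a d b c : G) (x y z : A) :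
    diBr ε (fun u v => dl u v) (fun u v => dr u v) a d x
        (diBr ε (fun u v => dl u v) (fun u v => dr u v) b c y z)
      = dl x (dl y z) - ε b c • dl x (dr z y) - ε a d • dr (dl y z) x
        + (ε a d * ε b c) • dr (dr z y) x := by
  simp only [diBr, map_sub, map_smul, LinearMap.sub_apply, LinearMap.smul_apply, smul_sub,
    smul_smul]
  abel

variable {ε} in
theorem diBr_leibniz_s9 [Add G] (hε : IsSkewBicharacter ε) {a b c : G} {x y z : A}
    (hyxz : dl (dr y x) z = dr y (dl x z)) (hzxy : dl (dr z x) y = dr z (dl x y))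
    (hxyz : dl x (dl y z) = dl (dl x y) z) (hxzy : dl (dl x z) y = dl x (dr z y))
    (hzyx : dr (dr z y) x = dr z (dr y x)) (hyzx : dr y (dr z x) = dr (dl y z) x) :
    diBr ε (fun u v => dl u v) (fun u v => dr u v) (a + b) c
        (diBr ε (fun u v => dl u v) (fun u v => dr u v) a b x y) z
      = diBr ε (fun u v => dl u v) (fun u v => dr u v) a (b + c) x
          (diBr ε (fun u v => dl u v) (fun u v => dr u v) b c y z)
        + ε b c • diBr ε (fun u v => dl u v) (fun u v => dr u v) (a + c) b
            (diBr ε (fun u v => dl u v) (fun u v => dr u v) a c x z) y := by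
  rw [diBr_diBr_left, diBr_diBr_right, diBr_diBr_left, hyxz, hzxy, hxyz, hxzy, hzyx, hyzx]
  simp only [smul_sub, smul_add, smul_smul]
  rw [hε.mul_map_add_left_swap_mul, hε.mul_map_add_left_swap, hε.mul_eq_map_add_left,
    hε.map_add_left_mul_eq_map_add_right_mul]
  abel

end Leibniz

theorem stmt9_general {K G A : Type*} [Field K] [AddCommGroup G] [AddCommGroup A] [Module K A]
    (𝒜 : G → Submodule K A) (ε : G → G → K)
    (hε1 : ∀ a b, ε a b * ε b a = 1)
    (hε2 : ∀ a b c, ε a (b + c) = ε a b * ε a c)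
    (hε3 : ∀ a b c, ε (a + b) c = ε a c * ε b c)
    (dl dr : A →ₗ[K] A →ₗ[K] A)
    (h1 : ∀ a b c : G, ∀ x ∈ 𝒜 a, ∀ y ∈ 𝒜 b, ∀ z ∈ 𝒜 c,
      dl (dr x y) z = dr x (dl y z))
    (h2 : ∀ a b c : G, ∀ x ∈ 𝒜 a, ∀ y ∈ 𝒜 b, ∀ z ∈ 𝒜 c,
      dl x (dl y z) = dl (dl x y) z)
    (h3 : ∀ a b c : G, ∀ x ∈ 𝒜 a, ∀ y ∈ 𝒜 b, ∀ z ∈ 𝒜 c,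
      dl (dl x y) z = dl x (dr y z))
    (h4 : ∀ a b c : G, ∀ x ∈ 𝒜 a, ∀ y ∈ 𝒜 b, ∀ z ∈ 𝒜 c,
      dr (dr x y) z = dr x (dr y z))
    (h5 : ∀ a b c : G, ∀ x ∈ 𝒜 a, ∀ y ∈ 𝒜 b, ∀ z ∈ 𝒜 c,
      dr x (dr y z) = dr (dl x y) z) :
    ∀ a b c : G, ∀ x ∈ 𝒜 a, ∀ y ∈ 𝒜 b, ∀ z ∈ 𝒜 c,
      diBr ε (fun u v => dl u v) (fun u v => dr u v) (a + b) c
          (diBr ε (fun u v => dl u v) (fun u v => dr u v) a b x y) z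
        = diBr ε (fun u v => dl u v) (fun u v => dr u v) a (b + c) x
            (diBr ε (fun u v => dl u v) (fun u v => dr u v) b c y z)
          + ε b c • diBr ε (fun u v => dl u v) (fun u v => dr u v) (a + c) b
              (diBr ε (fun u v => dl u v) (fun u v => dr u v) a c x z) y := by
  intro a b c x hx y hy z hz
  exact diBr_leibniz_s9 dl dr ⟨hε1, hε2, hε3⟩ (h1 b a c y hy x hx z hz) (h1 c a b z hz x hx y hy)
    (h2 a b c x hx y hy z hz) (h3 a c b x hx z hz y hy) (h4 c b a z hz y hy x hx)
    (h5 b c a y hy z hz x hx)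

/-- An associative color dialgebra gives a Leibniz color algebra via
`[x,y] := x⊣y − ε(x,y) y⊢x`. -/
theorem stmt9 {K G A : Type*} [Field K] [AddCommGroup G] [AddCommGroup A] [Module K A]
    (𝒜 : G → Submodule K A) (ε : G → G → K)
    (hε1 : ∀ a b, ε a b * ε b a = 1)
    (hε2 : ∀ a b c, ε a (b + c) = ε a b * ε a c)
    (hε3 : ∀ a b c, ε (a + b) c = ε a c * ε b c)
    (dl dr : A →ₗ[K] A →ₗ[K] A)
    (hgrl : ∀ a b : G, ∀ x ∈ 𝒜 a, ∀ y ∈ 𝒜 b, dl x y ∈ 𝒜 (a + b))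
    (hgrr : ∀ a b : G, ∀ x ∈ 𝒜 a, ∀ y ∈ 𝒜 b, dr x y ∈ 𝒜 (a + b))
    (h1 : ∀ a b c : G, ∀ x ∈ 𝒜 a, ∀ y ∈ 𝒜 b, ∀ z ∈ 𝒜 c,
      dl (dr x y) z = dr x (dl y z))
    (h2 : ∀ a b c : G, ∀ x ∈ 𝒜 a, ∀ y ∈ 𝒜 b, ∀ z ∈ 𝒜 c,
      dl x (dl y z) = dl (dl x y) z)
    (h3 : ∀ a b c : G, ∀ x ∈ 𝒜 a, ∀ y ∈ 𝒜 b, ∀ z ∈ 𝒜 c,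
      dl (dl x y) z = dl x (dr y z))
    (h4 : ∀ a b c : G, ∀ x ∈ 𝒜 a, ∀ y ∈ 𝒜 b, ∀ z ∈ 𝒜 c,
      dr (dr x y) z = dr x (dr y z))
    (h5 : ∀ a b c : G, ∀ x ∈ 𝒜 a, ∀ y ∈ 𝒜 b, ∀ z ∈ 𝒜 c,
      dr x (dr y z) = dr (dl x y) z) :
    ∀ a b c : G, ∀ x ∈ 𝒜 a, ∀ y ∈ 𝒜 b, ∀ z ∈ 𝒜 c,
      diBr ε (fun u v => dl u v) (fun u v => dr u v) (a + b) c
          (diBr ε (fun u v => dl u v) (fun u v => dr u v) a b x y) z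
        = diBr ε (fun u v => dl u v) (fun u v => dr u v) a (b + c) x
            (diBr ε (fun u v => dl u v) (fun u v => dr u v) b c y z)
          + ε b c • diBr ε (fun u v => dl u v) (fun u v => dr u v) (a + c) b
              (diBr ε (fun u v => dl u v) (fun u v => dr u v) a c x z) y :=
  stmt9_general 𝒜 ε hε1 hε2 hε3 dl dr h1 h2 h3 h4 h5
end

section
/- If (A, ⊣, ⊥, ⊢, ε) is an associative color trialgebra, then A with the triple bracket [x,y,z] := x⊣(y⊥z − ε(y,z) z⊥y) − ε(x,y+z)(y⊥z − ε(y,z) z⊥y)⊢x is a ternary Leibniz color algebra. -/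
/-!
Write `[x, w] := x⊣w − ε(x,w) w⊢x` and `{y, z} := y⊥z − ε(y,z) z⊥y`, so that
`[x,y,z] = [x, {y,z}]`. The dialgebra axioms linking `⊣` and `⊢` make `[-,-]` a color Leibniz
bracket, and the axioms linking `⊥` with `⊣`, `⊢` make `[-, v]` an ε-derivation of `{-,-}`.
Expanding `[[x,{y,z}],{t,u}]` by the Leibniz rule and then `[{y,z},{t,u}]` by the derivation
rule gives the three terms of the ternary identity.
-/

/-- The ternary bracket
`[x,y,z] := x⊣(y⊥z − ε(y,z) z⊥y) − ε(x,y+z)(y⊥z − ε(y,z) z⊥y)⊢x`,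
where `a, b, c` are the degrees of the homogeneous elements `x, y, z`. -/
def triBr {K G A : Type*} [Field K] [AddCommGroup G] [AddCommGroup A] [Module K A]
    (ε : G → G → K) (dl dm dr : A → A → A) (a b c : G) (x y z : A) : A :=
  dl x (dm y z - ε b c • dm z y) - ε a (b + c) • dr (dm y z - ε b c • dm z y) x

namespace ColorTrialgebra

variable {K G A : Type*} [CommRing K] [AddCommGroup A] [Module K A]

def colorBracket (ε : G → G → K) (dl dr : A →ₗ[K] A →ₗ[K] A) (a p : G) (x w : A) : A :=
  dl x w - ε a p • dr w x

def colorComm (ε : G → G → K) (dm : A →ₗ[K] A →ₗ[K] A) (b c : G) (y z : A) : A :=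
  dm y z - ε b c • dm z y

theorem triBr_eq_colorBracket_colorComm {K G A : Type*} [Field K] [AddCommGroup G]
    [AddCommGroup A] [Module K A] (ε : G → G → K) (dl dm dr : A →ₗ[K] A →ₗ[K] A)
    (a b c : G) (x y z : A) :
    triBr ε (fun p q => dl p q) (fun p q => dm p q) (fun p q => dr p q) a b c x y z
      = colorBracket ε dl dr a (b + c) x (colorComm ε dm b c y z) :=
  rfl

theorem colorBracket_add_smul_right (ε : G → G → K) (dl dr : A →ₗ[K] A →ₗ[K] A)
    (a p : G) (x w₁ w₂ : A) (s : K) :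
    colorBracket ε dl dr a p x (w₁ + s • w₂)
      = colorBracket ε dl dr a p x w₁ + s • colorBracket ε dl dr a p x w₂ := by
  simp only [colorBracket, map_add, map_smul, LinearMap.add_apply, LinearMap.smul_apply]
  module

theorem colorComm_mem [AddCommGroup G] (𝒜 : G → Submodule K A) (ε : G → G → K) (dm : A →ₗ[K] A →ₗ[K] A)
    (hgrm : ∀ a b : G, ∀ x ∈ 𝒜 a, ∀ y ∈ 𝒜 b, dm x y ∈ 𝒜 (a + b))
    {b c : G} {y z : A} (hy : y ∈ 𝒜 b) (hz : z ∈ 𝒜 c) :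
    colorComm ε dm b c y z ∈ 𝒜 (b + c) := by
  have hzy := hgrm c b z hz y hy
  rw [add_comm c b] at hzy
  exact sub_mem (hgrm b c y hy z hz) (Submodule.smul_mem _ _ hzy)

variable [AddCommGroup G] {ε : G → G → K} (hε1 : ∀ a b, ε a b * ε b a = 1)
  (hε2 : ∀ a b c, ε a (b + c) = ε a b * ε a c) (hε3 : ∀ a b c, ε (a + b) c = ε a c * ε b c)
include hε1 hε2 hε3

theorem colorBracket_leibniz (dl dr : A →ₗ[K] A →ₗ[K] A) (a p q : G) (x w v : A)
    (hl_xwv : dl (dl x w) v = dl x (dl w v))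
    (hrl_wxv : dl (dr w x) v = dr w (dl x v))
    (hrl_vxw : dl (dr v x) w = dr v (dl x w))
    (hr_vwx : dr (dr v w) x = dr v (dr w x))
    (hlr_xvw : dl (dl x v) w = dl x (dr v w))
    (hlr_wvx : dr (dl w v) x = dr w (dr v x)) :
    colorBracket ε dl dr (a + p) q (colorBracket ε dl dr a p x w) v
      = colorBracket ε dl dr a (p + q) x (colorBracket ε dl dr p q w v)
        + ε p q • colorBracket ε dl dr (a + q) p (colorBracket ε dl dr a q x v) w := by
  simp only [colorBracket, map_sub, map_smul, LinearMap.sub_apply, LinearMap.smul_apply,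
    smul_sub, smul_smul, hε2, hε3]
  rw [hl_xwv, hrl_wxv, hrl_vxw, hr_vwx, ← hlr_xvw, hlr_wvx]
  match_scalars
  · ring
  · linear_combination ε a p * hε1 p q
  · ring
  · ring
  · ring
  · linear_combination -(ε a p * ε a q) * hε1 p q

theorem colorBracket_colorComm (dl dm dr : A →ₗ[K] A →ₗ[K] A) (b c q : G) (y z v : A)
    (hml_yzv : dl (dm y z) v = dm y (dl z v))
    (hml_zyv : dl (dm z y) v = dm z (dl y v))
    (hrm_vyz : dr v (dm y z) = dm (dr v y) z)
    (hrm_vzy : dr v (dm z y) = dm (dr v z) y)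
    (hlm_yvz : dm (dl y v) z = dm y (dr v z))
    (hlm_zvy : dm (dl z v) y = dm z (dr v y)) :
    colorBracket ε dl dr (b + c) q (colorComm ε dm b c y z) v
      = colorComm ε dm b (c + q) y (colorBracket ε dl dr c q z v)
        + ε c q • colorComm ε dm (b + q) c (colorBracket ε dl dr b q y v) z := by
  simp only [colorBracket, colorComm, map_sub, map_smul, LinearMap.sub_apply,
    LinearMap.smul_apply, smul_sub, smul_smul, hε2, hε3]
  rw [hml_yzv, hml_zyv, hrm_vyz, hrm_vzy, ← hlm_yvz, ← hlm_zvy]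
  match_scalars
  · ring
  · linear_combination ε b c * hε1 c q
  · ring
  · ring
  · ring
  · linear_combination -(ε b c * ε b q) * hε1 c q

end ColorTrialgebra

open ColorTrialgebra in
theorem stmt12_general {K G A : Type*} [Field K] [AddCommGroup G] [AddCommGroup A] [Module K A]
    (𝒜 : G → Submodule K A) (ε : G → G → K)
    (hε1 : ∀ a b, ε a b * ε b a = 1)
    (hε2 : ∀ a b c, ε a (b + c) = ε a b * ε a c)
    (hε3 : ∀ a b c, ε (a + b) c = ε a c * ε b c)
    (dl dm dr : A →ₗ[K] A →ₗ[K] A)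
    (hgrm : ∀ a b : G, ∀ x ∈ 𝒜 a, ∀ y ∈ 𝒜 b, dm x y ∈ 𝒜 (a + b))
    (hassocl : ∀ a b c : G, ∀ x ∈ 𝒜 a, ∀ y ∈ 𝒜 b, ∀ z ∈ 𝒜 c,
      dl (dl x y) z = dl x (dl y z))
    (hassocr : ∀ a b c : G, ∀ x ∈ 𝒜 a, ∀ y ∈ 𝒜 b, ∀ z ∈ 𝒜 c,
      dr (dr x y) z = dr x (dr y z))
    (h1 : ∀ a b c : G, ∀ x ∈ 𝒜 a, ∀ y ∈ 𝒜 b, ∀ z ∈ 𝒜 c,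
      dl (dl x y) z = dl x (dr y z) ∧ dl x (dr y z) = dl x (dm y z))
    (h2 : ∀ a b c : G, ∀ x ∈ 𝒜 a, ∀ y ∈ 𝒜 b, ∀ z ∈ 𝒜 c,
      dl (dr x y) z = dr x (dl y z))
    (h3 : ∀ a b c : G, ∀ x ∈ 𝒜 a, ∀ y ∈ 𝒜 b, ∀ z ∈ 𝒜 c,
      dr (dl x y) z = dr x (dr y z) ∧ dr x (dr y z) = dr (dm x y) z)
    (h4 : ∀ a b c : G, ∀ x ∈ 𝒜 a, ∀ y ∈ 𝒜 b, ∀ z ∈ 𝒜 c,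
      dl (dm x y) z = dm x (dl y z))
    (h5 : ∀ a b c : G, ∀ x ∈ 𝒜 a, ∀ y ∈ 𝒜 b, ∀ z ∈ 𝒜 c,
      dm (dl x y) z = dm x (dr y z))
    (h6 : ∀ a b c : G, ∀ x ∈ 𝒜 a, ∀ y ∈ 𝒜 b, ∀ z ∈ 𝒜 c,
      dm (dr x y) z = dr x (dm y z)) :
    ∀ a b c d e : G, ∀ x ∈ 𝒜 a, ∀ y ∈ 𝒜 b, ∀ z ∈ 𝒜 c, ∀ t ∈ 𝒜 d, ∀ u ∈ 𝒜 e,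
      triBr ε (fun p q => dl p q) (fun p q => dm p q) (fun p q => dr p q)
          (a + b + c) d e
          (triBr ε (fun p q => dl p q) (fun p q => dm p q) (fun p q => dr p q)
            a b c x y z) t u
        = triBr ε (fun p q => dl p q) (fun p q => dm p q) (fun p q => dr p q)
            a b (c + d + e) x y
            (triBr ε (fun p q => dl p q) (fun p q => dm p q) (fun p q => dr p q)
              c d e z t u)
          + ε c (d + e) •
            triBr ε (fun p q => dl p q) (fun p q => dm p q) (fun p q => dr p q)
              a (b + d + e) c x
              (triBr ε (fun p q => dl p q) (fun p q => dm p q) (fun p q => dr p q)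
                b d e y t u) z
          + ε (b + c) (d + e) •
            triBr ε (fun p q => dl p q) (fun p q => dm p q) (fun p q => dr p q)
              (a + d + e) b c
              (triBr ε (fun p q => dl p q) (fun p q => dm p q) (fun p q => dr p q)
                a d e x t u) y z := by
  intro a b c d e x hx y hy z hz t ht u hu
  simp only [triBr_eq_colorBracket_colorComm]
  set W := colorComm ε dm b c y z
  set V := colorComm ε dm d e t u
  have hW : W ∈ 𝒜 (b + c) := colorComm_mem 𝒜 ε dm hgrm hy hz
  have hV : V ∈ 𝒜 (d + e) := colorComm_mem 𝒜 ε dm hgrm ht hu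
  rw [add_assoc a b c, colorBracket_leibniz hε1 hε2 hε3 dl dr a (b + c) (d + e) x W V
      (hassocl _ _ _ x hx W hW V hV) (h2 _ _ _ W hW x hx V hV) (h2 _ _ _ V hV x hx W hW)
      (hassocr _ _ _ V hV W hW x hx) (h1 _ _ _ x hx V hV W hW).1 (h3 _ _ _ W hW V hV x hx).1,
    colorBracket_colorComm hε1 hε2 hε3 dl dm dr b c (d + e) y z V
      (h4 _ _ _ y hy z hz V hV) (h4 _ _ _ z hz y hy V hV) (h6 _ _ _ V hV y hy z hz).symm
      (h6 _ _ _ V hV z hz y hy).symm (h5 _ _ _ y hy V hV z hz) (h5 _ _ _ z hz V hV y hy),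
    colorBracket_add_smul_right]
  rw [show b + d + e + c = b + c + (d + e) by abel]
  simp only [add_assoc]

/-- An associative color trialgebra gives a ternary Leibniz color
algebra via the bracket `triBr`. -/
theorem stmt12 {K G A : Type*} [Field K] [AddCommGroup G] [AddCommGroup A] [Module K A]
    (𝒜 : G → Submodule K A) (ε : G → G → K)
    (hε1 : ∀ a b, ε a b * ε b a = 1)
    (hε2 : ∀ a b c, ε a (b + c) = ε a b * ε a c)
    (hε3 : ∀ a b c, ε (a + b) c = ε a c * ε b c)
    (dl dm dr : A →ₗ[K] A →ₗ[K] A)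
    (hgrl : ∀ a b : G, ∀ x ∈ 𝒜 a, ∀ y ∈ 𝒜 b, dl x y ∈ 𝒜 (a + b))
    (hgrm : ∀ a b : G, ∀ x ∈ 𝒜 a, ∀ y ∈ 𝒜 b, dm x y ∈ 𝒜 (a + b))
    (hgrr : ∀ a b : G, ∀ x ∈ 𝒜 a, ∀ y ∈ 𝒜 b, dr x y ∈ 𝒜 (a + b))
    (hassocl : ∀ a b c : G, ∀ x ∈ 𝒜 a, ∀ y ∈ 𝒜 b, ∀ z ∈ 𝒜 c,
      dl (dl x y) z = dl x (dl y z))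
    (hassocm : ∀ a b c : G, ∀ x ∈ 𝒜 a, ∀ y ∈ 𝒜 b, ∀ z ∈ 𝒜 c,
      dm (dm x y) z = dm x (dm y z))
    (hassocr : ∀ a b c : G, ∀ x ∈ 𝒜 a, ∀ y ∈ 𝒜 b, ∀ z ∈ 𝒜 c,
      dr (dr x y) z = dr x (dr y z))
    (h1 : ∀ a b c : G, ∀ x ∈ 𝒜 a, ∀ y ∈ 𝒜 b, ∀ z ∈ 𝒜 c,
      dl (dl x y) z = dl x (dr y z) ∧ dl x (dr y z) = dl x (dm y z))
    (h2 : ∀ a b c : G, ∀ x ∈ 𝒜 a, ∀ y ∈ 𝒜 b, ∀ z ∈ 𝒜 c,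
      dl (dr x y) z = dr x (dl y z))
    (h3 : ∀ a b c : G, ∀ x ∈ 𝒜 a, ∀ y ∈ 𝒜 b, ∀ z ∈ 𝒜 c,
      dr (dl x y) z = dr x (dr y z) ∧ dr x (dr y z) = dr (dm x y) z)
    (h4 : ∀ a b c : G, ∀ x ∈ 𝒜 a, ∀ y ∈ 𝒜 b, ∀ z ∈ 𝒜 c,
      dl (dm x y) z = dm x (dl y z))
    (h5 : ∀ a b c : G, ∀ x ∈ 𝒜 a, ∀ y ∈ 𝒜 b, ∀ z ∈ 𝒜 c,
      dm (dl x y) z = dm x (dr y z))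
    (h6 : ∀ a b c : G, ∀ x ∈ 𝒜 a, ∀ y ∈ 𝒜 b, ∀ z ∈ 𝒜 c,
      dm (dr x y) z = dr x (dm y z)) :
    ∀ a b c d e : G, ∀ x ∈ 𝒜 a, ∀ y ∈ 𝒜 b, ∀ z ∈ 𝒜 c, ∀ t ∈ 𝒜 d, ∀ u ∈ 𝒜 e,
      triBr ε (fun p q => dl p q) (fun p q => dm p q) (fun p q => dr p q)
          (a + b + c) d e
          (triBr ε (fun p q => dl p q) (fun p q => dm p q) (fun p q => dr p q)
            a b c x y z) t u
        = triBr ε (fun p q => dl p q) (fun p q => dm p q) (fun p q => dr p q)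
            a b (c + d + e) x y
            (triBr ε (fun p q => dl p q) (fun p q => dm p q) (fun p q => dr p q)
              c d e z t u)
          + ε c (d + e) •
            triBr ε (fun p q => dl p q) (fun p q => dm p q) (fun p q => dr p q)
              a (b + d + e) c x
              (triBr ε (fun p q => dl p q) (fun p q => dm p q) (fun p q => dr p q)
                b d e y t u) z
          + ε (b + c) (d + e) •
            triBr ε (fun p q => dl p q) (fun p q => dm p q) (fun p q => dr p q)
              (a + d + e) b c
              (triBr ε (fun p q => dl p q) (fun p q => dm p q) (fun p q => dr p q)
                a d e x t u) y z :=
  stmt12_general 𝒜 ε hε1 hε2 hε3 dl dm dr hgrm hassocl hassocr h1 h2 h3 h4 h5 h6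
end

section
/- If (A, ·, ε, R) is a Rota-Baxter associative color algebra of weight λ, then the operations x⊣y := x·R(y), x⊢y := ε(x,y)R(x)·y, and x•y := λ ε(x,y) x·y make A into a tridendriform color algebra. -/
/-!
Unfolded, each tridendriform axiom is associativity of `·` on one triple of homogeneous elements
(`R` preserves degrees) multiplied by an identity between values of the bicharacter. In the two
axioms where `R` is applied to a sum, `(x⊣y)⊣z` and `x⊢(y⊢z)`, the sum is recognised as the
right-hand side of the Rota-Baxter identity, which collapses it to `R(y)·R(z)` resp. `R(x)·R(y)`.
-/

section RBtridend

variable {K G A : Type*} [Field K] [AddCommGroup G] [AddCommGroup A] [Module K A]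

/-- `x⊣y := x·R(y)`. -/
def ldf (mul : A → A → A) (R : A → A) (x y : A) : A := mul x (R y)

/-- `x⊢y := ε(x,y) R(x)·y`, where `a, b` are the degrees of `x, y`. -/
def rdf (ε : G → G → K) (mul : A → A → A) (R : A → A) (a b : G) (x y : A) : A :=
  ε a b • mul (R x) y

/-- `x•y := λ ε(x,y) x·y`, where `a, b` are the degrees of `x, y`. -/
def mdf (ε : G → G → K) (mul : A → A → A) (lam : K) (a b : G) (x y : A) : A :=
  lam • ε a b • mul x y

section Identities

variable {ε : G → G → K} {mul : A →ₗ[K] A →ₗ[K] A} {R : A →ₗ[K] A} {lam : K} {a b c : G}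
  {x y z : A}

omit [AddCommGroup G] in
theorem ldf_ldf_eq (hε : ε c b * ε b c = 1)
    (hassoc : mul (mul x (R y)) (R z) = mul x (mul (R y) (R z)))
    (hRB : mul (R y) (R z) = R (mul (R y) z + mul y (R z) + lam • mul y z)) :
    ldf (mul · ·) R (ldf (mul · ·) R x y) z
      = ldf (mul · ·) R x (ldf (mul · ·) R y z + ε c b • rdf ε (mul · ·) R b c y z
          + ε c b • mdf ε (mul · ·) lam b c y z) := by
  have hcancel (v : A) : ε c b • ε b c • v = v := by rw [smul_smul, hε, one_smul]
  simp only [ldf, rdf, mdf, hassoc, hRB, smul_comm (ε c b) lam, hcancel]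
  abel_nf

theorem ldf_rdf_eq (hε1 : ε c a * ε a c = 1) (hε2 : ε a (b + c) = ε a b * ε a c)
    (hassoc : mul (mul (R x) y) (R z) = mul (R x) (mul y (R z))) :
    ldf (mul · ·) R (rdf ε (mul · ·) R a b x y) z
      = ε c a • rdf ε (mul · ·) R a (b + c) x (ldf (mul · ·) R y z) := by
  simp only [ldf, rdf, map_smul, LinearMap.smul_apply, smul_smul, hassoc]
  congr 1
  linear_combination (-ε a b) * hε1 - ε c a * hε2

theorem rdf_rdf_eq (hε2 : ε a (b + c) = ε a b * ε a c) (hε3 : ε (a + b) c = ε a c * ε b c)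
    (hassoc : mul (mul (R x) (R y)) z = mul (R x) (mul (R y) z))
    (hRB : mul (R x) (R y) = R (mul (R x) y + mul x (R y) + lam • mul x y)) :
    rdf ε (mul · ·) R a (b + c) x (rdf ε (mul · ·) R b c y z)
      = rdf ε (mul · ·) R (a + b) c
          (ε a b • ldf (mul · ·) R x y + rdf ε (mul · ·) R a b x y
            + mdf ε (mul · ·) lam a b x y) z := by
  have hsum : ε a b • mul x (R y) + ε a b • mul (R x) y + lam • ε a b • mul x y
      = ε a b • (mul (R x) y + mul x (R y) + lam • mul x y) := by
    rw [smul_comm lam, ← smul_add, ← smul_add, add_comm (mul x (R y))]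
  simp only [ldf, rdf, mdf]
  rw [hsum, R.map_smul, ← hRB]
  simp only [map_smul, LinearMap.smul_apply, hassoc, smul_smul, hε2, hε3]
  congr 1
  ring

theorem mdf_ldf_eq (hε1 : ε b a * ε a b = 1) (hε2 : ε a (b + c) = ε a b * ε a c)
    (hε3 : ε (a + b) c = ε a c * ε b c)
    (hassoc : mul (mul x (R y)) z = mul x (mul (R y) z)) :
    mdf ε (mul · ·) lam (a + b) c (ldf (mul · ·) R x y) z
      = ε b a • mdf ε (mul · ·) lam a (b + c) x (rdf ε (mul · ·) R b c y z) := by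
  simp only [ldf, rdf, mdf, map_smul, smul_smul, hassoc, hε2, hε3]
  congr 1
  linear_combination (-lam * ε a c * ε b c) * hε1

theorem mdf_rdf_eq (hε2 : ε a (b + c) = ε a b * ε a c) (hε3 : ε (a + b) c = ε a c * ε b c)
    (hassoc : mul (mul (R x) y) z = mul (R x) (mul y z)) :
    mdf ε (mul · ·) lam (a + b) c (rdf ε (mul · ·) R a b x y) z
      = rdf ε (mul · ·) R a (b + c) x (mdf ε (mul · ·) lam b c y z) := by
  simp only [rdf, mdf, map_smul, LinearMap.smul_apply, smul_smul, hassoc, hε2, hε3]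
  congr 1
  ring

theorem ldf_mdf_eq (hε1 : ε c a * ε a c = 1) (hε2 : ε a (b + c) = ε a b * ε a c)
    (hassoc : mul (mul x y) (R z) = mul x (mul y (R z))) :
    ldf (mul · ·) R (mdf ε (mul · ·) lam a b x y) z
      = ε c a • mdf ε (mul · ·) lam a (b + c) x (ldf (mul · ·) R y z) := by
  simp only [ldf, mdf, map_smul, LinearMap.smul_apply, smul_smul, hassoc, hε2]
  congr 1
  linear_combination (-lam * ε a b) * hε1

theorem mdf_mdf_eq (hε2 : ε a (b + c) = ε a b * ε a c) (hε3 : ε (a + b) c = ε a c * ε b c)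
    (hassoc : mul (mul x y) z = mul x (mul y z)) :
    mdf ε (mul · ·) lam (a + b) c (mdf ε (mul · ·) lam a b x y) z
      = mdf ε (mul · ·) lam a (b + c) x (mdf ε (mul · ·) lam b c y z) := by
  simp only [mdf, map_smul, LinearMap.smul_apply, smul_smul, hassoc, hε2, hε3]
  congr 1
  ring

end Identities

theorem stmt13_general (𝒜 : G → Submodule K A) (ε : G → G → K)
    (hε1 : ∀ a b, ε a b * ε b a = 1)
    (hε2 : ∀ a b c, ε a (b + c) = ε a b * ε a c)
    (hε3 : ∀ a b c, ε (a + b) c = ε a c * ε b c)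
    (mul : A →ₗ[K] A →ₗ[K] A)
    (hassoc : ∀ a b c : G, ∀ x ∈ 𝒜 a, ∀ y ∈ 𝒜 b, ∀ z ∈ 𝒜 c,
      mul (mul x y) z = mul x (mul y z))
    (R : A →ₗ[K] A) (lam : K)
    (hReven : ∀ a : G, ∀ x ∈ 𝒜 a, R x ∈ 𝒜 a)
    (hRB : ∀ a b : G, ∀ x ∈ 𝒜 a, ∀ y ∈ 𝒜 b,
      mul (R x) (R y) = R (mul (R x) y + mul x (R y) + lam • mul x y)) :
    ∀ a b c : G, ∀ x ∈ 𝒜 a, ∀ y ∈ 𝒜 b, ∀ z ∈ 𝒜 c,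
      (ldf (fun p q => mul p q) (fun p => R p)
          (ldf (fun p q => mul p q) (fun p => R p) x y) z
        = ldf (fun p q => mul p q) (fun p => R p) x
            (ldf (fun p q => mul p q) (fun p => R p) y z
              + ε c b • rdf ε (fun p q => mul p q) (fun p => R p) b c y z
              + ε c b • mdf ε (fun p q => mul p q) lam b c y z)) ∧
      (ldf (fun p q => mul p q) (fun p => R p)
          (rdf ε (fun p q => mul p q) (fun p => R p) a b x y) z
        = ε c a • rdf ε (fun p q => mul p q) (fun p => R p) a (b + c) x
            (ldf (fun p q => mul p q) (fun p => R p) y z)) ∧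
      (rdf ε (fun p q => mul p q) (fun p => R p) a (b + c) x
          (rdf ε (fun p q => mul p q) (fun p => R p) b c y z)
        = rdf ε (fun p q => mul p q) (fun p => R p) (a + b) c
            (ε a b • ldf (fun p q => mul p q) (fun p => R p) x y
              + rdf ε (fun p q => mul p q) (fun p => R p) a b x y
              + mdf ε (fun p q => mul p q) lam a b x y) z) ∧
      (mdf ε (fun p q => mul p q) lam (a + b) c
          (ldf (fun p q => mul p q) (fun p => R p) x y) z
        = ε b a • mdf ε (fun p q => mul p q) lam a (b + c) x
            (rdf ε (fun p q => mul p q) (fun p => R p) b c y z)) ∧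
      (mdf ε (fun p q => mul p q) lam (a + b) c
          (rdf ε (fun p q => mul p q) (fun p => R p) a b x y) z
        = rdf ε (fun p q => mul p q) (fun p => R p) a (b + c) x
            (mdf ε (fun p q => mul p q) lam b c y z)) ∧
      (ldf (fun p q => mul p q) (fun p => R p)
          (mdf ε (fun p q => mul p q) lam a b x y) z
        = ε c a • mdf ε (fun p q => mul p q) lam a (b + c) x
            (ldf (fun p q => mul p q) (fun p => R p) y z)) ∧
      (mdf ε (fun p q => mul p q) lam (a + b) c
          (mdf ε (fun p q => mul p q) lam a b x y) z
        = mdf ε (fun p q => mul p q) lam a (b + c) x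
            (mdf ε (fun p q => mul p q) lam b c y z)) := by
  intro a b c x hx y hy z hz
  have hRx := hReven a x hx
  have hRy := hReven b y hy
  have hRz := hReven c z hz
  exact ⟨ldf_ldf_eq (hε1 c b) (hassoc a b c x hx _ hRy _ hRz) (hRB b c y hy z hz),
    ldf_rdf_eq (hε1 c a) (hε2 a b c) (hassoc a b c _ hRx y hy _ hRz),
    rdf_rdf_eq (hε2 a b c) (hε3 a b c) (hassoc a b c _ hRx _ hRy z hz) (hRB a b x hx y hy),
    mdf_ldf_eq (hε1 b a) (hε2 a b c) (hε3 a b c) (hassoc a b c x hx _ hRy z hz),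
    mdf_rdf_eq (hε2 a b c) (hε3 a b c) (hassoc a b c _ hRx y hy z hz),
    ldf_mdf_eq (hε1 c a) (hε2 a b c) (hassoc a b c x hx y hy _ hRz),
    mdf_mdf_eq (hε2 a b c) (hε3 a b c) (hassoc a b c x hx y hy z hz)⟩

/-- A Rota-Baxter associative color algebra of weight λ gives a
tridendriform color algebra via `x⊣y := x·R(y)`, `x⊢y := ε(x,y)R(x)·y` and
`x•y := λ ε(x,y) x·y`. -/
theorem stmt13 (𝒜 : G → Submodule K A) (ε : G → G → K)
    (hε1 : ∀ a b, ε a b * ε b a = 1)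
    (hε2 : ∀ a b c, ε a (b + c) = ε a b * ε a c)
    (hε3 : ∀ a b c, ε (a + b) c = ε a c * ε b c)
    (mul : A →ₗ[K] A →ₗ[K] A)
    (hgr : ∀ a b : G, ∀ x ∈ 𝒜 a, ∀ y ∈ 𝒜 b, mul x y ∈ 𝒜 (a + b))
    (hassoc : ∀ a b c : G, ∀ x ∈ 𝒜 a, ∀ y ∈ 𝒜 b, ∀ z ∈ 𝒜 c,
      mul (mul x y) z = mul x (mul y z))
    (R : A →ₗ[K] A) (lam : K)
    (hReven : ∀ a : G, ∀ x ∈ 𝒜 a, R x ∈ 𝒜 a)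
    (hRB : ∀ a b : G, ∀ x ∈ 𝒜 a, ∀ y ∈ 𝒜 b,
      mul (R x) (R y) = R (mul (R x) y + mul x (R y) + lam • mul x y)) :
    ∀ a b c : G, ∀ x ∈ 𝒜 a, ∀ y ∈ 𝒜 b, ∀ z ∈ 𝒜 c,
      (ldf (fun p q => mul p q) (fun p => R p)
          (ldf (fun p q => mul p q) (fun p => R p) x y) z
        = ldf (fun p q => mul p q) (fun p => R p) x
            (ldf (fun p q => mul p q) (fun p => R p) y z
              + ε c b • rdf ε (fun p q => mul p q) (fun p => R p) b c y z
              + ε c b • mdf ε (fun p q => mul p q) lam b c y z)) ∧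
      (ldf (fun p q => mul p q) (fun p => R p)
          (rdf ε (fun p q => mul p q) (fun p => R p) a b x y) z
        = ε c a • rdf ε (fun p q => mul p q) (fun p => R p) a (b + c) x
            (ldf (fun p q => mul p q) (fun p => R p) y z)) ∧
      (rdf ε (fun p q => mul p q) (fun p => R p) a (b + c) x
          (rdf ε (fun p q => mul p q) (fun p => R p) b c y z)
        = rdf ε (fun p q => mul p q) (fun p => R p) (a + b) c
            (ε a b • ldf (fun p q => mul p q) (fun p => R p) x y
              + rdf ε (fun p q => mul p q) (fun p => R p) a b x y
              + mdf ε (fun p q => mul p q) lam a b x y) z) ∧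
      (mdf ε (fun p q => mul p q) lam (a + b) c
          (ldf (fun p q => mul p q) (fun p => R p) x y) z
        = ε b a • mdf ε (fun p q => mul p q) lam a (b + c) x
            (rdf ε (fun p q => mul p q) (fun p => R p) b c y z)) ∧
      (mdf ε (fun p q => mul p q) lam (a + b) c
          (rdf ε (fun p q => mul p q) (fun p => R p) a b x y) z
        = rdf ε (fun p q => mul p q) (fun p => R p) a (b + c) x
            (mdf ε (fun p q => mul p q) lam b c y z)) ∧
      (ldf (fun p q => mul p q) (fun p => R p)
          (mdf ε (fun p q => mul p q) lam a b x y) z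
        = ε c a • mdf ε (fun p q => mul p q) lam a (b + c) x
            (ldf (fun p q => mul p q) (fun p => R p) y z)) ∧
      (mdf ε (fun p q => mul p q) lam (a + b) c
          (mdf ε (fun p q => mul p q) lam a b x y) z
        = mdf ε (fun p q => mul p q) lam a (b + c) x
            (mdf ε (fun p q => mul p q) lam b c y z)) :=
  stmt13_general 𝒜 ε hε1 hε2 hε3 mul hassoc R lam hReven hRB

end RBtridend
end

section
/- If (A, ⊣, ⊢, •, ε) is a tridendriform color algebra, then the product x∗y := x⊢y + ε(x,y)x⊣y + x•y is associative (making (A,∗,ε) an associative color algebra). -/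
/-!
The axioms let every term of `(x ∗ y) ∗ z` be rewritten with `z` moved inside:
`(x ∗ y) ⊢ z = x ⊢ (y ⊢ z)` and `(x ⊣ y) ⊣ z = ε(z,y) x ⊣ (y ∗ z)`, while the other products become
`x ⊢ (y ⊣ z)`, `x • (y ⊣ z)`, `x ⊢ (y • z)`, `x • (y ⊢ z)` and `x • (y • z)`. Expanding
`x ∗ (y ∗ z)` gives the same seven terms, with signs that agree because
`ε(a,c) ε(c,a) = ε(b,c) ε(c,b) = 1`.
-/

section TridendriformColor

variable {K G A : Type*} [CommRing K] [AddCommGroup A] [Module K A]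

structure IsSkewBicharacter_s14 [Add G] (ε : G → G → K) : Prop where
  mul_swap : ∀ a b, ε a b * ε b a = 1
  add_right : ∀ a b c, ε a (b + c) = ε a b * ε a c
  add_left : ∀ a b c, ε (a + b) c = ε a c * ε b c

/-- The axioms of a tridendriform color algebra with products `⊣ = dl`, `⊢ = dr`, `• = dm`,
imposed on homogeneous elements. -/
structure IsTridendriformColor [Add G] (𝒜 : G → Submodule K A) (ε : G → G → K)
    (dl dr dm : A →ₗ[K] A →ₗ[K] A) : Prop where
  dl_dl : ∀ a b c : G, ∀ x ∈ 𝒜 a, ∀ y ∈ 𝒜 b, ∀ z ∈ 𝒜 c,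
    dl (dl x y) z = dl x (dl y z + ε c b • dr y z + ε c b • dm y z)
  dl_dr : ∀ a b c : G, ∀ x ∈ 𝒜 a, ∀ y ∈ 𝒜 b, ∀ z ∈ 𝒜 c,
    dl (dr x y) z = ε c a • dr x (dl y z)
  dr_dr : ∀ a b c : G, ∀ x ∈ 𝒜 a, ∀ y ∈ 𝒜 b, ∀ z ∈ 𝒜 c,
    dr x (dr y z) = dr (ε a b • dl x y + dr x y + dm x y) z
  dm_dl : ∀ a b c : G, ∀ x ∈ 𝒜 a, ∀ y ∈ 𝒜 b, ∀ z ∈ 𝒜 c,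
    dm (dl x y) z = ε b a • dm x (dr y z)
  dm_dr : ∀ a b c : G, ∀ x ∈ 𝒜 a, ∀ y ∈ 𝒜 b, ∀ z ∈ 𝒜 c,
    dm (dr x y) z = dr x (dm y z)
  dl_dm : ∀ a b c : G, ∀ x ∈ 𝒜 a, ∀ y ∈ 𝒜 b, ∀ z ∈ 𝒜 c,
    dl (dm x y) z = ε c a • dm x (dl y z)
  dm_dm : ∀ a b c : G, ∀ x ∈ 𝒜 a, ∀ y ∈ 𝒜 b, ∀ z ∈ 𝒜 c,
    dm (dm x y) z = dm x (dm y z)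

/-- The product `u ∗ v` of elements of degrees `p` and `q`. -/
def colorProd (ε : G → G → K) (dl dr dm : A →ₗ[K] A →ₗ[K] A) (p q : G) (u v : A) : A :=
  dr u v + ε p q • dl u v + dm u v

namespace IsTridendriformColor

variable [Add G] {𝒜 : G → Submodule K A} {ε : G → G → K} {dl dr dm : A →ₗ[K] A →ₗ[K] A}
  (hT : IsTridendriformColor 𝒜 ε dl dr dm) {a b c : G} {x y z : A}
  (hx : x ∈ 𝒜 a) (hy : y ∈ 𝒜 b) (hz : z ∈ 𝒜 c)
include hT hx hy hz

theorem dr_colorProd_left : dr (colorProd ε dl dr dm a b x y) z = dr x (dr y z) := by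
  rw [hT.dr_dr a b c x hx y hy z hz, colorProd]
  congr 2
  abel

theorem dl_dl_eq_smul_dl_colorProd (hε : ε c b * ε b c = 1) :
    dl (dl x y) z = ε c b • dl x (colorProd ε dl dr dm b c y z) := by
  rw [hT.dl_dl a b c x hx y hy z hz, colorProd]
  simp only [map_add, map_smul, smul_add, smul_smul, hε, one_smul]
  abel

theorem dl_colorProd_left (hε : ε c b * ε b c = 1) :
    dl (colorProd ε dl dr dm a b x y) z =
      ε c a • (dr x (dl y z) + dm x (dl y z)) +
        (ε a b * ε c b) • dl x (colorProd ε dl dr dm b c y z) := by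
  rw [colorProd]
  simp only [map_add, map_smul, LinearMap.add_apply, LinearMap.smul_apply]
  rw [hT.dl_dr a b c x hx y hy z hz, hT.dl_dm a b c x hx y hy z hz,
    hT.dl_dl_eq_smul_dl_colorProd hx hy hz hε, smul_add, mul_smul]
  abel

theorem dm_colorProd_left (hε : ε a b * ε b a = 1) :
    dm (colorProd ε dl dr dm a b x y) z = dr x (dm y z) + dm x (dr y z) + dm x (dm y z) := by
  simp only [colorProd, map_add, map_smul, LinearMap.add_apply, LinearMap.smul_apply]
  rw [hT.dm_dr a b c x hx y hy z hz, hT.dm_dl a b c x hx y hy z hz,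
    hT.dm_dm a b c x hx y hy z hz, smul_smul, hε, one_smul]

theorem colorProd_assoc (hε : IsSkewBicharacter_s14 ε) :
    colorProd ε dl dr dm (a + b) c (colorProd ε dl dr dm a b x y) z =
      colorProd ε dl dr dm a (b + c) x (colorProd ε dl dr dm b c y z) := by
  conv_lhs =>
    rw [colorProd, hT.dr_colorProd_left hx hy hz,
      hT.dl_colorProd_left hx hy hz (hε.mul_swap c b),
      hT.dm_colorProd_left hx hy hz (hε.mul_swap a b)]
  simp only [colorProd, map_add, map_smul, hε.add_left, hε.add_right]
  match_scalars
  all_goals grind [hε.mul_swap a c, hε.mul_swap b c]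

end IsTridendriformColor

end TridendriformColor

theorem stmt14_general {K G A : Type*} [Field K] [AddCommGroup G] [AddCommGroup A] [Module K A]
    (𝒜 : G → Submodule K A) (ε : G → G → K)
    (hε1 : ∀ a b, ε a b * ε b a = 1)
    (hε2 : ∀ a b c, ε a (b + c) = ε a b * ε a c)
    (hε3 : ∀ a b c, ε (a + b) c = ε a c * ε b c)
    (dl dr dm : A →ₗ[K] A →ₗ[K] A)
    (h1 : ∀ a b c : G, ∀ x ∈ 𝒜 a, ∀ y ∈ 𝒜 b, ∀ z ∈ 𝒜 c,
      dl (dl x y) z = dl x (dl y z + ε c b • dr y z + ε c b • dm y z))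
    (h2 : ∀ a b c : G, ∀ x ∈ 𝒜 a, ∀ y ∈ 𝒜 b, ∀ z ∈ 𝒜 c,
      dl (dr x y) z = ε c a • dr x (dl y z))
    (h3 : ∀ a b c : G, ∀ x ∈ 𝒜 a, ∀ y ∈ 𝒜 b, ∀ z ∈ 𝒜 c,
      dr x (dr y z) = dr (ε a b • dl x y + dr x y + dm x y) z)
    (h4 : ∀ a b c : G, ∀ x ∈ 𝒜 a, ∀ y ∈ 𝒜 b, ∀ z ∈ 𝒜 c,
      dm (dl x y) z = ε b a • dm x (dr y z))
    (h5 : ∀ a b c : G, ∀ x ∈ 𝒜 a, ∀ y ∈ 𝒜 b, ∀ z ∈ 𝒜 c,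
      dm (dr x y) z = dr x (dm y z))
    (h6 : ∀ a b c : G, ∀ x ∈ 𝒜 a, ∀ y ∈ 𝒜 b, ∀ z ∈ 𝒜 c,
      dl (dm x y) z = ε c a • dm x (dl y z))
    (h7 : ∀ a b c : G, ∀ x ∈ 𝒜 a, ∀ y ∈ 𝒜 b, ∀ z ∈ 𝒜 c,
      dm (dm x y) z = dm x (dm y z)) :
    ∀ a b c : G, ∀ x ∈ 𝒜 a, ∀ y ∈ 𝒜 b, ∀ z ∈ 𝒜 c,
      (fun (p q : G) (u v : A) => dr u v + ε p q • dl u v + dm u v) (a + b) c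
          ((fun (p q : G) (u v : A) => dr u v + ε p q • dl u v + dm u v) a b x y) z
        = (fun (p q : G) (u v : A) => dr u v + ε p q • dl u v + dm u v) a (b + c) x
            ((fun (p q : G) (u v : A) => dr u v + ε p q • dl u v + dm u v) b c y z) := by
  intro a b c x hx y hy z hz
  exact IsTridendriformColor.colorProd_assoc ⟨h1, h2, h3, h4, h5, h6, h7⟩ hx hy hz
    ⟨hε1, hε2, hε3⟩

/-- In a tridendriform color algebra, the product
`x∗y := x⊢y + ε(x,y) x⊣y + x•y` is associative on homogeneous elements. -/
theorem stmt14 {K G A : Type*} [Field K] [AddCommGroup G] [AddCommGroup A] [Module K A]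
    (𝒜 : G → Submodule K A) (ε : G → G → K)
    (hε1 : ∀ a b, ε a b * ε b a = 1)
    (hε2 : ∀ a b c, ε a (b + c) = ε a b * ε a c)
    (hε3 : ∀ a b c, ε (a + b) c = ε a c * ε b c)
    (dl dr dm : A →ₗ[K] A →ₗ[K] A)
    (hgrl : ∀ a b : G, ∀ x ∈ 𝒜 a, ∀ y ∈ 𝒜 b, dl x y ∈ 𝒜 (a + b))
    (hgrr : ∀ a b : G, ∀ x ∈ 𝒜 a, ∀ y ∈ 𝒜 b, dr x y ∈ 𝒜 (a + b))
    (hgrm : ∀ a b : G, ∀ x ∈ 𝒜 a, ∀ y ∈ 𝒜 b, dm x y ∈ 𝒜 (a + b))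
    (h1 : ∀ a b c : G, ∀ x ∈ 𝒜 a, ∀ y ∈ 𝒜 b, ∀ z ∈ 𝒜 c,
      dl (dl x y) z = dl x (dl y z + ε c b • dr y z + ε c b • dm y z))
    (h2 : ∀ a b c : G, ∀ x ∈ 𝒜 a, ∀ y ∈ 𝒜 b, ∀ z ∈ 𝒜 c,
      dl (dr x y) z = ε c a • dr x (dl y z))
    (h3 : ∀ a b c : G, ∀ x ∈ 𝒜 a, ∀ y ∈ 𝒜 b, ∀ z ∈ 𝒜 c,
      dr x (dr y z) = dr (ε a b • dl x y + dr x y + dm x y) z)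
    (h4 : ∀ a b c : G, ∀ x ∈ 𝒜 a, ∀ y ∈ 𝒜 b, ∀ z ∈ 𝒜 c,
      dm (dl x y) z = ε b a • dm x (dr y z))
    (h5 : ∀ a b c : G, ∀ x ∈ 𝒜 a, ∀ y ∈ 𝒜 b, ∀ z ∈ 𝒜 c,
      dm (dr x y) z = dr x (dm y z))
    (h6 : ∀ a b c : G, ∀ x ∈ 𝒜 a, ∀ y ∈ 𝒜 b, ∀ z ∈ 𝒜 c,
      dl (dm x y) z = ε c a • dm x (dl y z))
    (h7 : ∀ a b c : G, ∀ x ∈ 𝒜 a, ∀ y ∈ 𝒜 b, ∀ z ∈ 𝒜 c,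
      dm (dm x y) z = dm x (dm y z)) :
    ∀ a b c : G, ∀ x ∈ 𝒜 a, ∀ y ∈ 𝒜 b, ∀ z ∈ 𝒜 c,
      (fun (p q : G) (u v : A) => dr u v + ε p q • dl u v + dm u v) (a + b) c
          ((fun (p q : G) (u v : A) => dr u v + ε p q • dl u v + dm u v) a b x y) z
        = (fun (p q : G) (u v : A) => dr u v + ε p q • dl u v + dm u v) a (b + c) x
            ((fun (p q : G) (u v : A) => dr u v + ε p q • dl u v + dm u v) b c y z) :=
  stmt14_general 𝒜 ε hε1 hε2 hε3 dl dr dm h1 h2 h3 h4 h5 h6 h7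
end

section
/- If (A, ⊣, ⊥, ⊢) is an associative trialgebra (ungraded), then (A, ⊣, ⊢, ⊥) is a (−1)-tridendriform algebra; in particular the product x∗y := x⊣y + x⊢y − x⊥y is associative. -/
/-! For `q = -1` the two deformed tridendriform axioms read
`(x⊣y)⊣z = x⊣(y⊣z) + x⊣(y⊢z) - x⊣(y⊥z)` and `x⊢(y⊢z) = (x⊣y)⊢z + (x⊢y)⊢z - (x⊥y)⊢z`.
In a trialgebra the last two terms cancel in the first (`x⊣(y⊢z) = x⊣(y⊥z)`) and the first and
last cancel in the second (`(x⊣y)⊢z = (x⊥y)⊢z`), so both reduce to associativity of `⊣` and `⊢`.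
The remaining tridendriform axioms are trialgebra axioms verbatim. Associativity of
`x⊣y + x⊢y + q x•y` holds in every `q`-tridendriform algebra: expanding both sides, the seven axioms
match the terms one by one. -/

namespace Trialgebra

variable {K A : Type*} [CommRing K] [AddCommGroup A] [Module K A]

structure IsTrialgebra (dl dm dr : A →ₗ[K] A →ₗ[K] A) : Prop where
  dl_assoc (x y z : A) : dl (dl x y) z = dl x (dl y z)
  dm_assoc (x y z : A) : dm (dm x y) z = dm x (dm y z)
  dr_assoc (x y z : A) : dr (dr x y) z = dr x (dr y z)
  dl_dl_eq_dl_dr (x y z : A) : dl (dl x y) z = dl x (dr y z)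
  dl_dr_eq_dl_dm (x y z : A) : dl x (dr y z) = dl x (dm y z)
  dl_dr (x y z : A) : dl (dr x y) z = dr x (dl y z)
  dr_dl_eq_dr_dr (x y z : A) : dr (dl x y) z = dr x (dr y z)
  dr_dr_eq_dr_dm (x y z : A) : dr x (dr y z) = dr (dm x y) z
  dl_dm (x y z : A) : dl (dm x y) z = dm x (dl y z)
  dm_dl (x y z : A) : dm (dl x y) z = dm x (dr y z)
  dm_dr (x y z : A) : dm (dr x y) z = dr x (dm y z)

structure IsTridendriform (q : K) (dl dr dm : A →ₗ[K] A →ₗ[K] A) : Prop where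
  dl_dl (x y z : A) : dl (dl x y) z = dl x (dl y z + dr y z + q • dm y z)
  dl_dr (x y z : A) : dl (dr x y) z = dr x (dl y z)
  dr_dr (x y z : A) : dr x (dr y z) = dr (dl x y + dr x y + q • dm x y) z
  dm_dl (x y z : A) : dm (dl x y) z = dm x (dr y z)
  dm_dr (x y z : A) : dm (dr x y) z = dr x (dm y z)
  dl_dm (x y z : A) : dl (dm x y) z = dm x (dl y z)
  dm_assoc (x y z : A) : dm (dm x y) z = dm x (dm y z)

theorem IsTridendriform.mul_assoc {q : K} {dl dr dm : A →ₗ[K] A →ₗ[K] A}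
    (h : IsTridendriform q dl dr dm) (x y z : A) :
    (dl + dr + q • dm) ((dl + dr + q • dm) x y) z =
      (dl + dr + q • dm) x ((dl + dr + q • dm) y z) := by
  simp only [LinearMap.add_apply, LinearMap.smul_apply]
  rw [← h.dr_dr]
  simp only [map_add, map_smul, LinearMap.add_apply, LinearMap.smul_apply,
    h.dl_dl, h.dl_dr, h.dl_dm, h.dm_dl, h.dm_dr, h.dm_assoc]
  module

theorem IsTrialgebra.isTridendriform {dl dm dr : A →ₗ[K] A →ₗ[K] A}
    (h : IsTrialgebra dl dm dr) : IsTridendriform (-1) dl dr dm where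
  dl_dl x y z := by
    have hcancel := h.dl_dr_eq_dl_dm x y z
    simp only [map_add, map_smul, hcancel, h.dl_assoc]
    module
  dl_dr := h.dl_dr
  dr_dr x y z := by
    have hcancel : dr (dm x y) z = dr (dl x y) z :=
      (h.dr_dr_eq_dr_dm x y z).symm.trans (h.dr_dl_eq_dr_dr x y z).symm
    simp only [map_add, map_smul, LinearMap.add_apply, LinearMap.smul_apply, hcancel,
      h.dr_assoc]
    module
  dm_dl := h.dm_dl
  dm_dr := h.dm_dr
  dl_dm := h.dl_dm
  dm_assoc := h.dm_assoc

end Trialgebra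

open Trialgebra in
/-- An associative trialgebra (A, ⊣, ⊥, ⊢) is a (−1)-tridendriform
algebra with `• := ⊥`; in particular `x∗y := x⊣y + x⊢y − x⊥y` is associative. -/
theorem stmt15 {K A : Type*} [Field K] [AddCommGroup A] [Module K A]
    (dl dm dr : A →ₗ[K] A →ₗ[K] A)
    (hassocl : ∀ x y z : A, dl (dl x y) z = dl x (dl y z))
    (hassocm : ∀ x y z : A, dm (dm x y) z = dm x (dm y z))
    (hassocr : ∀ x y z : A, dr (dr x y) z = dr x (dr y z))
    (h1 : ∀ x y z : A, dl (dl x y) z = dl x (dr y z) ∧ dl x (dr y z) = dl x (dm y z))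
    (h2 : ∀ x y z : A, dl (dr x y) z = dr x (dl y z))
    (h3 : ∀ x y z : A, dr (dl x y) z = dr x (dr y z) ∧ dr x (dr y z) = dr (dm x y) z)
    (h4 : ∀ x y z : A, dl (dm x y) z = dm x (dl y z))
    (h5 : ∀ x y z : A, dm (dl x y) z = dm x (dr y z))
    (h6 : ∀ x y z : A, dm (dr x y) z = dr x (dm y z)) :
    -- (A, ⊣, ⊢, ⊥) is a (−1)-tridendriform algebra:
    (∀ x y z : A, dl (dl x y) z = dl x (dl y z + dr y z - dm y z)) ∧
    (∀ x y z : A, dl (dr x y) z = dr x (dl y z)) ∧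
    (∀ x y z : A, dr x (dr y z) = dr (dl x y + dr x y - dm x y) z) ∧
    (∀ x y z : A, dm (dl x y) z = dm x (dr y z)) ∧
    (∀ x y z : A, dm (dr x y) z = dr x (dm y z)) ∧
    (∀ x y z : A, dl (dm x y) z = dm x (dl y z)) ∧
    (∀ x y z : A, dm (dm x y) z = dm x (dm y z)) ∧
    -- in particular x∗y := x⊣y + x⊢y − x⊥y is associative:
    (∀ x y z : A,
      (fun u v : A => dl u v + dr u v - dm u v)
          ((fun u v : A => dl u v + dr u v - dm u v) x y) z
        = (fun u v : A => dl u v + dr u v - dm u v) x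
            ((fun u v : A => dl u v + dr u v - dm u v) y z)) := by
  have hT : IsTrialgebra dl dm dr :=
    ⟨hassocl, hassocm, hassocr, fun x y z => (h1 x y z).1, fun x y z => (h1 x y z).2, h2,
      fun x y z => (h3 x y z).1, fun x y z => (h3 x y z).2, h4, h5, h6⟩
  have hD := hT.isTridendriform
  refine ⟨fun x y z => ?_, hD.dl_dr, fun x y z => ?_, hD.dm_dl, hD.dm_dr, hD.dl_dm, hD.dm_assoc,
    fun x y z => ?_⟩
  · simpa only [neg_one_smul, ← sub_eq_add_neg] using hD.dl_dl x y z
  · simpa only [neg_one_smul, ← sub_eq_add_neg] using hD.dr_dr x y z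
  · simpa only [LinearMap.add_apply, LinearMap.sub_apply, LinearMap.smul_apply, neg_one_smul,
      ← sub_eq_add_neg] using hD.mul_assoc x y z
end

section
/- If (A, ·, ε) is an associative color algebra, then the triple product [x,y,z] := x·y·z + ε(x,y)ε(x,z)ε(y,z) z·y·x makes A into a color Jordan triple system. -/
/-!
Outer ε-symmetry holds because, by skew-symmetry of `ε`, the coefficient `ε(c,b)ε(c,a)ε(b,a)`
of the swapped product is the inverse of `ε(a,b)ε(a,c)ε(b,c)`. For the Jordan identity, associativity
on homogeneous elements turns each of the four nested products into an ε-combination of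
left-normed words of length five; eight words occur, each twice, and the bicharacter laws make
their coefficients agree.
-/

/-- The Jordan triple product `[x,y,z] := x·y·z + ε(x,y)ε(x,z)ε(y,z) z·y·x`, where
`a, b, c` are the degrees of the homogeneous elements `x, y, z`. -/
def jt {K G A : Type*} [Field K] [AddCommGroup A] [Module K A]
    (ε : G → G → K) (mul : A → A → A) (a b c : G) (x y z : A) : A :=
  mul (mul x y) z + (ε a b * ε a c * ε b c) • mul (mul z y) x

theorem jt_eq_smul_jt_swap {K G A : Type*} [Field K] [AddCommGroup A] [Module K A]
    (ε : G → G → K) (hε : ∀ a b, ε a b * ε b a = 1)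
    (mul : A → A → A) (a b c : G) (x y z : A) :
    jt ε mul a b c x y z = (ε a b * ε a c * ε b c) • jt ε mul c b a z y x := by
  have hprod : (ε a b * ε a c * ε b c) * (ε c b * ε c a * ε b a) = 1 := by
    linear_combination (ε a b * ε b a * ε a c * ε c a) * hε b c
      + (ε a b * ε b a) * hε a c + hε a b
  simp only [jt, smul_add, smul_smul, hprod, one_smul]
  exact add_comm _ _

section GradedAssociative

variable {K G A : Type*} [Field K] [AddCommGroup G] [AddCommGroup A] [Module K A]
    {𝒜 : G → Submodule K A} {mul : A →ₗ[K] A →ₗ[K] A}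

theorem mul_mul_mul_eq_of_graded
    (hgr : ∀ a b : G, ∀ x ∈ 𝒜 a, ∀ y ∈ 𝒜 b, mul x y ∈ 𝒜 (a + b))
    (hassoc : ∀ a b c : G, ∀ x ∈ 𝒜 a, ∀ y ∈ 𝒜 b, ∀ z ∈ 𝒜 c,
      mul (mul x y) z = mul x (mul y z))
    {a b c d : G} {x y z t : A} (hx : x ∈ 𝒜 a) (hy : y ∈ 𝒜 b) (hz : z ∈ 𝒜 c)
    (ht : t ∈ 𝒜 d) :
    mul x (mul (mul y z) t) = mul (mul (mul x y) z) t := by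
  rw [← hassoc _ _ _ _ hx _ (hgr _ _ _ hy _ hz) _ ht, ← hassoc _ _ _ _ hx _ hy _ hz]

theorem jt_jt_left_eq_of_graded (ε : G → G → K)
    (hgr : ∀ a b : G, ∀ x ∈ 𝒜 a, ∀ y ∈ 𝒜 b, mul x y ∈ 𝒜 (a + b))
    (hassoc : ∀ a b c : G, ∀ x ∈ 𝒜 a, ∀ y ∈ 𝒜 b, ∀ z ∈ 𝒜 c,
      mul (mul x y) z = mul x (mul y z))
    {a b c d e : G} {x y z t u : A} (hx : x ∈ 𝒜 a) (hy : y ∈ 𝒜 b) (hz : z ∈ 𝒜 c)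
    (ht : t ∈ 𝒜 d) (hu : u ∈ 𝒜 e) :
    jt ε (fun p q => mul p q) (a + b + c) d e (jt ε (fun p q => mul p q) a b c x y z) t u
      = mul (mul (mul (mul x y) z) t) u
        + (ε a b * ε a c * ε b c) • mul (mul (mul (mul z y) x) t) u
        + (ε (a + b + c) d * ε (a + b + c) e * ε d e) • mul (mul (mul (mul u t) x) y) z
        + (ε (a + b + c) d * ε (a + b + c) e * ε d e * (ε a b * ε a c * ε b c)) •
            mul (mul (mul (mul u t) z) y) x := by
  simp only [jt, map_add, map_smul, LinearMap.add_apply, LinearMap.smul_apply, smul_add,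
    smul_smul]
  rw [mul_mul_mul_eq_of_graded hgr hassoc (hgr _ _ _ hu _ ht) hx hy hz,
    mul_mul_mul_eq_of_graded hgr hassoc (hgr _ _ _ hu _ ht) hz hy hx]
  abel

theorem jt_jt_middle_eq_of_graded (ε : G → G → K)
    (hgr : ∀ a b : G, ∀ x ∈ 𝒜 a, ∀ y ∈ 𝒜 b, mul x y ∈ 𝒜 (a + b))
    (hassoc : ∀ a b c : G, ∀ x ∈ 𝒜 a, ∀ y ∈ 𝒜 b, ∀ z ∈ 𝒜 c,
      mul (mul x y) z = mul x (mul y z))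
    {a b c d e : G} {x y z t u : A} (hx : x ∈ 𝒜 a) (hy : y ∈ 𝒜 b) (hz : z ∈ 𝒜 c)
    (ht : t ∈ 𝒜 d) (hu : u ∈ 𝒜 e) :
    jt ε (fun p q => mul p q) a (b + e + d) c x (jt ε (fun p q => mul p q) b e d y u t) z
      = mul (mul (mul (mul x y) u) t) z
        + (ε b e * ε b d * ε e d) • mul (mul (mul (mul x t) u) y) z
        + (ε a (b + e + d) * ε a c * ε (b + e + d) c) • mul (mul (mul (mul z y) u) t) x
        + (ε a (b + e + d) * ε a c * ε (b + e + d) c * (ε b e * ε b d * ε e d)) •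
            mul (mul (mul (mul z t) u) y) x := by
  simp only [jt, map_add, map_smul, LinearMap.add_apply, LinearMap.smul_apply, smul_add,
    smul_smul]
  rw [mul_mul_mul_eq_of_graded hgr hassoc hx hy hu ht,
    mul_mul_mul_eq_of_graded hgr hassoc hx ht hu hy,
    mul_mul_mul_eq_of_graded hgr hassoc hz hy hu ht,
    mul_mul_mul_eq_of_graded hgr hassoc hz ht hu hy]
  abel

theorem jt_jt_right_eq_of_graded (ε : G → G → K)
    (hgr : ∀ a b : G, ∀ x ∈ 𝒜 a, ∀ y ∈ 𝒜 b, mul x y ∈ 𝒜 (a + b))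
    (hassoc : ∀ a b c : G, ∀ x ∈ 𝒜 a, ∀ y ∈ 𝒜 b, ∀ z ∈ 𝒜 c,
      mul (mul x y) z = mul x (mul y z))
    {a b c d e : G} {x y z t u : A} (hx : x ∈ 𝒜 a) (hy : y ∈ 𝒜 b) (hz : z ∈ 𝒜 c)
    (ht : t ∈ 𝒜 d) (hu : u ∈ 𝒜 e) :
    jt ε (fun p q => mul p q) a b (c + d + e) x y (jt ε (fun p q => mul p q) c d e z t u)
      = mul (mul (mul (mul x y) z) t) u
        + (ε c d * ε c e * ε d e) • mul (mul (mul (mul x y) u) t) z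
        + (ε a b * ε a (c + d + e) * ε b (c + d + e)) • mul (mul (mul (mul z t) u) y) x
        + (ε a b * ε a (c + d + e) * ε b (c + d + e) * (ε c d * ε c e * ε d e)) •
            mul (mul (mul (mul u t) z) y) x := by
  simp only [jt, map_add, map_smul, LinearMap.add_apply, LinearMap.smul_apply, smul_add,
    smul_smul]
  rw [mul_mul_mul_eq_of_graded hgr hassoc (hgr _ _ _ hx _ hy) hz ht hu,
    mul_mul_mul_eq_of_graded hgr hassoc (hgr _ _ _ hx _ hy) hu ht hz]
  abel

end GradedAssociative

/-- An associative color algebra gives a color Jordan triple system via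
`[x,y,z] := x·y·z + ε(x,y)ε(x,z)ε(y,z) z·y·x`. -/
theorem stmt17 {K G A : Type*} [Field K] [AddCommGroup G] [AddCommGroup A] [Module K A]
    (𝒜 : G → Submodule K A) (ε : G → G → K)
    (hε1 : ∀ a b, ε a b * ε b a = 1)
    (hε2 : ∀ a b c, ε a (b + c) = ε a b * ε a c)
    (hε3 : ∀ a b c, ε (a + b) c = ε a c * ε b c)
    (mul : A →ₗ[K] A →ₗ[K] A)
    (hgr : ∀ a b : G, ∀ x ∈ 𝒜 a, ∀ y ∈ 𝒜 b, mul x y ∈ 𝒜 (a + b))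
    (hassoc : ∀ a b c : G, ∀ x ∈ 𝒜 a, ∀ y ∈ 𝒜 b, ∀ z ∈ 𝒜 c,
      mul (mul x y) z = mul x (mul y z)) :
    -- outer ε-symmetry:
    (∀ a b c : G, ∀ x ∈ 𝒜 a, ∀ y ∈ 𝒜 b, ∀ z ∈ 𝒜 c,
      jt ε (fun p q => mul p q) a b c x y z
        = (ε a b * ε a c * ε b c) • jt ε (fun p q => mul p q) c b a z y x) ∧
    -- color Jordan triple identity:
    (∀ a b c d e : G, ∀ x ∈ 𝒜 a, ∀ y ∈ 𝒜 b, ∀ z ∈ 𝒜 c, ∀ t ∈ 𝒜 d, ∀ u ∈ 𝒜 e,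
      jt ε (fun p q => mul p q) (a + b + c) d e
          (jt ε (fun p q => mul p q) a b c x y z) t u
        = jt ε (fun p q => mul p q) a b (c + d + e) x y
            (jt ε (fun p q => mul p q) c d e z t u)
          - (ε c (d + e) * ε d e) •
            jt ε (fun p q => mul p q) a (b + e + d) c x
              (jt ε (fun p q => mul p q) b e d y u t) z
          + ε (b + c) (d + e) •
            jt ε (fun p q => mul p q) (a + d + e) b c
              (jt ε (fun p q => mul p q) a d e x t u) y z) := by
  have hinv : ∀ p q : G, ε q p = (ε p q)⁻¹ := fun p q => eq_inv_of_mul_eq_one_right (hε1 p q)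
  have hne : ∀ p q : G, ε p q ≠ 0 := fun p q => left_ne_zero_of_mul_eq_one (hε1 p q)
  refine ⟨fun a b c x _ y _ z _ => jt_eq_smul_jt_swap ε hε1 _ a b c x y z, ?_⟩
  intro a b c d e x hx y hy z hz t ht u hu
  rw [jt_jt_left_eq_of_graded ε hgr hassoc hx hy hz ht hu,
    jt_jt_right_eq_of_graded ε hgr hassoc hx hy hz ht hu,
    jt_jt_middle_eq_of_graded ε hgr hassoc hx hy hz ht hu,
    jt_jt_left_eq_of_graded ε hgr hassoc hx ht hu hy hz]
  simp only [hε2, hε3, hinv b d, hinv b e, hinv c d, hinv c e, hinv d e]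
  match_scalars <;> field_simp [hne] <;> ring
end

section
/- If (J, [-,-,-], ε) is a color Jordan triple system, then the bracket {x,y,z} := [x,y,z] − ε(y,z)[x,z,y] makes J into a color Lie triple system. -/
/-!
Right ε-skew-symmetry of `{x,y,z}` comes from `ε(b,c) ε(c,b) = 1`. For the ε-Jacobi identity,
outer ε-symmetry turns the six monomials `[y,z,x], [y,x,z], …` into multiples of
`[x,y,z], [x,z,y], [y,x,z]`, whose coefficients then cancel. For the ε-Nambu identity, the left
side expands into four brackets of the form `[[x,y,z],t,u]` (with `y, z` and `t, u` possibly
swapped); rewriting each by the color Jordan triple identity leaves exactly the monomials on the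
right side, and the coefficients agree because ε is a skew-symmetric bicharacter.
-/

/-- The bracket `{x,y,z} := [x,y,z] − ε(y,z)[x,z,y]`, where `a, b, c` are the degrees
of the homogeneous elements `x, y, z`. -/
def ltBr {K G A : Type*} [Field K] [AddCommGroup A] [Module K A]
    (ε : G → G → K) (tbr : A → A → A → A) (a b c : G) (x y z : A) : A :=
  tbr x y z - ε b c • tbr x z y

section Bicharacter

variable {K G : Type*} [DivisionRing K] {ε : G → G → K}

theorem eps_swap (hε : ∀ a b, ε a b * ε b a = 1) (a b : G) : ε b a = (ε a b)⁻¹ :=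
  (inv_eq_of_mul_eq_one_right (hε a b)).symm

theorem eps_ne_zero (hε : ∀ a b, ε a b * ε b a = 1) (a b : G) : ε a b ≠ 0 :=
  left_ne_zero_of_mul_eq_one (hε a b)

end Bicharacter

section ColorTripleSystem

variable {K G A : Type*} [Field K] [AddCommGroup A] [Module K A]

def IsOuterEpsSymmetric (𝒜 : G → Submodule K A) (ε : G → G → K) (tbr : A → A → A → A) :
    Prop :=
  ∀ a b c : G, ∀ x ∈ 𝒜 a, ∀ y ∈ 𝒜 b, ∀ z ∈ 𝒜 c,
    tbr x y z = (ε a b * ε a c * ε b c) • tbr z y x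

def ColorJordanIdentity [AddCommGroup G] (𝒜 : G → Submodule K A) (ε : G → G → K)
    (tbr : A →ₗ[K] A →ₗ[K] A →ₗ[K] A) : Prop :=
  ∀ a b c d e : G, ∀ x ∈ 𝒜 a, ∀ y ∈ 𝒜 b, ∀ z ∈ 𝒜 c, ∀ t ∈ 𝒜 d, ∀ u ∈ 𝒜 e,
    tbr (tbr x y z) t u
      = tbr x y (tbr z t u)
        - (ε c (d + e) * ε d e) • tbr x (tbr y u t) z
        + ε (b + c) (d + e) • tbr (tbr x t u) y z

variable {𝒜 : G → Submodule K A} {ε : G → G → K}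

theorem ltBr_skew (hε : ∀ a b, ε a b * ε b a = 1) (tbr : A → A → A → A) (a b c : G)
    (x y z : A) : ltBr ε tbr a b c x y z = -(ε b c • ltBr ε tbr a c b x z y) := by
  simp only [ltBr, smul_sub, smul_smul, hε, neg_sub, one_smul]

theorem ltBr_jacobi (hε : ∀ a b, ε a b * ε b a = 1) {tbr : A → A → A → A}
    (houter : IsOuterEpsSymmetric 𝒜 ε tbr) {a b c : G} {x y z : A}
    (hx : x ∈ 𝒜 a) (hy : y ∈ 𝒜 b) (hz : z ∈ 𝒜 c) :
    ε c a • ltBr ε tbr a b c x y z + ε a b • ltBr ε tbr b c a y z x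
      + ε b c • ltBr ε tbr c a b z x y = 0 := by
  simp only [ltBr]
  rw [houter b c a y hy z hz x hx, houter c a b z hz x hx y hy,
    houter c b a z hz y hy x hx]
  match_scalars <;> simp only [eps_swap hε b a, eps_swap hε c b] <;>
    field_simp [eps_ne_zero hε] <;> ring

theorem ltBr_nambu [AddCommGroup G] (hε1 : ∀ a b, ε a b * ε b a = 1)
    (hε2 : ∀ a b c, ε a (b + c) = ε a b * ε a c) (hε3 : ∀ a b c, ε (a + b) c = ε a c * ε b c)
    {tbr : A →ₗ[K] A →ₗ[K] A →ₗ[K] A} (hjordan : ColorJordanIdentity 𝒜 ε tbr)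
    {a b c d e : G} {x y z t u : A}
    (hx : x ∈ 𝒜 a) (hy : y ∈ 𝒜 b) (hz : z ∈ 𝒜 c) (ht : t ∈ 𝒜 d) (hu : u ∈ 𝒜 e) :
    ltBr ε (fun p q r => tbr p q r) (a + b + c) d e
        (ltBr ε (fun p q r => tbr p q r) a b c x y z) t u
      = ltBr ε (fun p q r => tbr p q r) a b (c + d + e) x y
          (ltBr ε (fun p q r => tbr p q r) c d e z t u)
        + ε c (d + e) •
          ltBr ε (fun p q r => tbr p q r) a (b + d + e) c x
            (ltBr ε (fun p q r => tbr p q r) b d e y t u) z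
        + ε (b + c) (d + e) •
          ltBr ε (fun p q r => tbr p q r) (a + d + e) b c
            (ltBr ε (fun p q r => tbr p q r) a d e x t u) y z := by
  simp only [ltBr, map_sub, map_smul, LinearMap.sub_apply, LinearMap.smul_apply]
  rw [hjordan a b c d e x hx y hy z hz t ht u hu, hjordan a c b d e x hx z hz y hy t ht u hu,
    hjordan a b c e d x hx y hy z hz u hu t ht, hjordan a c b e d x hx z hz y hy u hu t ht]
  match_scalars <;>
    simp only [hε2, hε3, eps_swap hε1 c d, eps_swap hε1 c e, eps_swap hε1 d e] <;>
    field_simp [eps_ne_zero hε1]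

end ColorTripleSystem

theorem stmt18_general {K G A : Type*} [Field K] [AddCommGroup G] [AddCommGroup A] [Module K A]
    (𝒜 : G → Submodule K A) (ε : G → G → K)
    (hε1 : ∀ a b, ε a b * ε b a = 1)
    (hε2 : ∀ a b c, ε a (b + c) = ε a b * ε a c)
    (hε3 : ∀ a b c, ε (a + b) c = ε a c * ε b c)
    (tbr : A →ₗ[K] A →ₗ[K] A →ₗ[K] A)
    (houter : ∀ a b c : G, ∀ x ∈ 𝒜 a, ∀ y ∈ 𝒜 b, ∀ z ∈ 𝒜 c,
      tbr x y z = (ε a b * ε a c * ε b c) • tbr z y x)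
    (hjordan : ∀ a b c d e : G, ∀ x ∈ 𝒜 a, ∀ y ∈ 𝒜 b, ∀ z ∈ 𝒜 c, ∀ t ∈ 𝒜 d, ∀ u ∈ 𝒜 e,
      tbr (tbr x y z) t u
        = tbr x y (tbr z t u)
          - (ε c (d + e) * ε d e) • tbr x (tbr y u t) z
          + ε (b + c) (d + e) • tbr (tbr x t u) y z) :
    -- right ε-skew-symmetry:
    (∀ a b c : G, ∀ x ∈ 𝒜 a, ∀ y ∈ 𝒜 b, ∀ z ∈ 𝒜 c,
      ltBr ε (fun p q r => tbr p q r) a b c x y z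
        = -(ε b c • ltBr ε (fun p q r => tbr p q r) a c b x z y)) ∧
    -- ternary ε-Jacobi identity:
    (∀ a b c : G, ∀ x ∈ 𝒜 a, ∀ y ∈ 𝒜 b, ∀ z ∈ 𝒜 c,
        ε c a • ltBr ε (fun p q r => tbr p q r) a b c x y z
      + ε a b • ltBr ε (fun p q r => tbr p q r) b c a y z x
      + ε b c • ltBr ε (fun p q r => tbr p q r) c a b z x y = 0) ∧
    -- ternary ε-Nambu identity:
    (∀ a b c d e : G, ∀ x ∈ 𝒜 a, ∀ y ∈ 𝒜 b, ∀ z ∈ 𝒜 c, ∀ t ∈ 𝒜 d, ∀ u ∈ 𝒜 e,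
      ltBr ε (fun p q r => tbr p q r) (a + b + c) d e
          (ltBr ε (fun p q r => tbr p q r) a b c x y z) t u
        = ltBr ε (fun p q r => tbr p q r) a b (c + d + e) x y
            (ltBr ε (fun p q r => tbr p q r) c d e z t u)
          + ε c (d + e) •
            ltBr ε (fun p q r => tbr p q r) a (b + d + e) c x
              (ltBr ε (fun p q r => tbr p q r) b d e y t u) z
          + ε (b + c) (d + e) •
            ltBr ε (fun p q r => tbr p q r) (a + d + e) b c
              (ltBr ε (fun p q r => tbr p q r) a d e x t u) y z) :=
  ⟨fun a b c x _ y _ z _ => ltBr_skew hε1 _ a b c x y z,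
    fun _ _ _ _ hx _ hy _ hz => ltBr_jacobi hε1 houter hx hy hz,
    fun _ _ _ _ _ _ hx _ hy _ hz _ ht _ hu => ltBr_nambu hε1 hε2 hε3 hjordan hx hy hz ht hu⟩

/-- A color Jordan triple system gives a color Lie triple system via
`{x,y,z} := [x,y,z] − ε(y,z)[x,z,y]`. -/
theorem stmt18 {K G A : Type*} [Field K] [AddCommGroup G] [AddCommGroup A] [Module K A]
    (𝒜 : G → Submodule K A) (ε : G → G → K)
    (hε1 : ∀ a b, ε a b * ε b a = 1)
    (hε2 : ∀ a b c, ε a (b + c) = ε a b * ε a c)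
    (hε3 : ∀ a b c, ε (a + b) c = ε a c * ε b c)
    (tbr : A →ₗ[K] A →ₗ[K] A →ₗ[K] A)
    (hgr : ∀ a b c : G, ∀ x ∈ 𝒜 a, ∀ y ∈ 𝒜 b, ∀ z ∈ 𝒜 c, tbr x y z ∈ 𝒜 (a + b + c))
    (houter : ∀ a b c : G, ∀ x ∈ 𝒜 a, ∀ y ∈ 𝒜 b, ∀ z ∈ 𝒜 c,
      tbr x y z = (ε a b * ε a c * ε b c) • tbr z y x)
    (hjordan : ∀ a b c d e : G, ∀ x ∈ 𝒜 a, ∀ y ∈ 𝒜 b, ∀ z ∈ 𝒜 c, ∀ t ∈ 𝒜 d, ∀ u ∈ 𝒜 e,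
      tbr (tbr x y z) t u
        = tbr x y (tbr z t u)
          - (ε c (d + e) * ε d e) • tbr x (tbr y u t) z
          + ε (b + c) (d + e) • tbr (tbr x t u) y z) :
    -- right ε-skew-symmetry:
    (∀ a b c : G, ∀ x ∈ 𝒜 a, ∀ y ∈ 𝒜 b, ∀ z ∈ 𝒜 c,
      ltBr ε (fun p q r => tbr p q r) a b c x y z
        = -(ε b c • ltBr ε (fun p q r => tbr p q r) a c b x z y)) ∧
    -- ternary ε-Jacobi identity:
    (∀ a b c : G, ∀ x ∈ 𝒜 a, ∀ y ∈ 𝒜 b, ∀ z ∈ 𝒜 c,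
        ε c a • ltBr ε (fun p q r => tbr p q r) a b c x y z
      + ε a b • ltBr ε (fun p q r => tbr p q r) b c a y z x
      + ε b c • ltBr ε (fun p q r => tbr p q r) c a b z x y = 0) ∧
    -- ternary ε-Nambu identity:
    (∀ a b c d e : G, ∀ x ∈ 𝒜 a, ∀ y ∈ 𝒜 b, ∀ z ∈ 𝒜 c, ∀ t ∈ 𝒜 d, ∀ u ∈ 𝒜 e,
      ltBr ε (fun p q r => tbr p q r) (a + b + c) d e
          (ltBr ε (fun p q r => tbr p q r) a b c x y z) t u
        = ltBr ε (fun p q r => tbr p q r) a b (c + d + e) x y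
            (ltBr ε (fun p q r => tbr p q r) c d e z t u)
          + ε c (d + e) •
            ltBr ε (fun p q r => tbr p q r) a (b + d + e) c x
              (ltBr ε (fun p q r => tbr p q r) b d e y t u) z
          + ε (b + c) (d + e) •
            ltBr ε (fun p q r => tbr p q r) (a + d + e) b c
              (ltBr ε (fun p q r => tbr p q r) a d e x t u) y z) :=
  stmt18_general 𝒜 ε hε1 hε2 hε3 tbr houter hjordan
end

section
/- If (A, ·, [-,-], ε) is a non-commutative Leibniz-Poisson color algebra, then (A, ·, {-,-,-}, ε) with {x,y,z} := [x, y·z] is a non-commutative ternary Leibniz-Nambu-Poisson color algebra: the ternary ε-Nambu identity holds for {-,-,-} and {x·y, z, t} = x·{y,z,t} + ε(y,z+t){x,z,t}·y. -/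
section ColorPoisson

variable {K G A : Type*} [CommSemiring K] [Add G] [AddCommMonoid A] [Module K A]
  {𝒜 : G → Submodule K A} {ε : G → G → K} {mul br : A →ₗ[K] A →ₗ[K] A}

theorem ternary_right_leibniz
    (hgrm : ∀ a b : G, ∀ x ∈ 𝒜 a, ∀ y ∈ 𝒜 b, mul x y ∈ 𝒜 (a + b))
    (hcomp : ∀ a b c : G, ∀ x ∈ 𝒜 a, ∀ y ∈ 𝒜 b, ∀ z ∈ 𝒜 c,
      br (mul x y) z = mul x (br y z) + ε b c • mul (br x z) y)
    {a b c d : G} {x y z t : A} (hx : x ∈ 𝒜 a) (hy : y ∈ 𝒜 b) (hz : z ∈ 𝒜 c) (ht : t ∈ 𝒜 d) :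
    br (mul x y) (mul z t) = mul x (br y (mul z t)) + ε b (c + d) • mul (br x (mul z t)) y :=
  hcomp a b (c + d) x hx y hy _ (hgrm c d z hz t ht)

theorem ternary_nambu_identity
    (hε : ∀ a b c, ε (a + b) c = ε a c * ε b c)
    (hgrm : ∀ a b : G, ∀ x ∈ 𝒜 a, ∀ y ∈ 𝒜 b, mul x y ∈ 𝒜 (a + b))
    (hLeib : ∀ a b c : G, ∀ x ∈ 𝒜 a, ∀ y ∈ 𝒜 b, ∀ z ∈ 𝒜 c,
      br (br x y) z = br x (br y z) + ε b c • br (br x z) y)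
    (hcomp : ∀ a b c : G, ∀ x ∈ 𝒜 a, ∀ y ∈ 𝒜 b, ∀ z ∈ 𝒜 c,
      br (mul x y) z = mul x (br y z) + ε b c • mul (br x z) y)
    {a b c d e : G} {x y z t u : A}
    (hx : x ∈ 𝒜 a) (hy : y ∈ 𝒜 b) (hz : z ∈ 𝒜 c) (ht : t ∈ 𝒜 d) (hu : u ∈ 𝒜 e) :
    br (br x (mul y z)) (mul t u)
      = br x (mul y (br z (mul t u)))
        + ε c (d + e) • br x (mul (br y (mul t u)) z)
        + ε (b + c) (d + e) • br (br x (mul t u)) (mul y z) := by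
  have htu := hgrm d e t ht u hu
  rw [hLeib a (b + c) (d + e) x hx _ (hgrm b c y hy z hz) _ htu,
    hcomp b c (d + e) y hy z hz _ htu, map_add, map_smul, hε, mul_smul]

end ColorPoisson

theorem stmt19_general {K G A : Type*} [Field K] [AddCommGroup G] [AddCommGroup A] [Module K A]
    (𝒜 : G → Submodule K A) (ε : G → G → K)
    (hε3 : ∀ a b c, ε (a + b) c = ε a c * ε b c)
    (mul : A →ₗ[K] A →ₗ[K] A) (br : A →ₗ[K] A →ₗ[K] A)
    (hgrm : ∀ a b : G, ∀ x ∈ 𝒜 a, ∀ y ∈ 𝒜 b, mul x y ∈ 𝒜 (a + b))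
    (hLeib : ∀ a b c : G, ∀ x ∈ 𝒜 a, ∀ y ∈ 𝒜 b, ∀ z ∈ 𝒜 c,
      br (br x y) z = br x (br y z) + ε b c • br (br x z) y)
    (hcomp : ∀ a b c : G, ∀ x ∈ 𝒜 a, ∀ y ∈ 𝒜 b, ∀ z ∈ 𝒜 c,
      br (mul x y) z = mul x (br y z) + ε b c • mul (br x z) y) :
    -- ternary ε-Nambu identity for {x,y,z} := [x, y·z]:
    (∀ a b c d e : G, ∀ x ∈ 𝒜 a, ∀ y ∈ 𝒜 b, ∀ z ∈ 𝒜 c, ∀ t ∈ 𝒜 d, ∀ u ∈ 𝒜 e,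
      br (br x (mul y z)) (mul t u)
        = br x (mul y (br z (mul t u)))
          + ε c (d + e) • br x (mul (br y (mul t u)) z)
          + ε (b + c) (d + e) • br (br x (mul t u)) (mul y z)) ∧
    -- right ternary Leibniz rule {x·y,z,t} = x·{y,z,t} + ε(y,z+t){x,z,t}·y:
    (∀ a b c d : G, ∀ x ∈ 𝒜 a, ∀ y ∈ 𝒜 b, ∀ z ∈ 𝒜 c, ∀ t ∈ 𝒜 d,
      br (mul x y) (mul z t)
        = mul x (br y (mul z t)) + ε b (c + d) • mul (br x (mul z t)) y) :=
  ⟨fun _ _ _ _ _ _ hx _ hy _ hz _ ht _ hu =>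
      ternary_nambu_identity hε3 hgrm hLeib hcomp hx hy hz ht hu,
    fun _ _ _ _ _ hx _ hy _ hz _ ht => ternary_right_leibniz hgrm hcomp hx hy hz ht⟩

/-- A non-commutative Leibniz-Poisson color algebra gives a
non-commutative ternary Leibniz-Nambu-Poisson color algebra via
`{x,y,z} := [x, y·z]`: the ternary ε-Nambu identity and the right ternary Leibniz
rule hold. -/
theorem stmt19 {K G A : Type*} [Field K] [AddCommGroup G] [AddCommGroup A] [Module K A]
    (𝒜 : G → Submodule K A) (ε : G → G → K)
    (hε1 : ∀ a b, ε a b * ε b a = 1)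
    (hε2 : ∀ a b c, ε a (b + c) = ε a b * ε a c)
    (hε3 : ∀ a b c, ε (a + b) c = ε a c * ε b c)
    (mul : A →ₗ[K] A →ₗ[K] A) (br : A →ₗ[K] A →ₗ[K] A)
    (hgrm : ∀ a b : G, ∀ x ∈ 𝒜 a, ∀ y ∈ 𝒜 b, mul x y ∈ 𝒜 (a + b))
    (hgrb : ∀ a b : G, ∀ x ∈ 𝒜 a, ∀ y ∈ 𝒜 b, br x y ∈ 𝒜 (a + b))
    (hassoc : ∀ a b c : G, ∀ x ∈ 𝒜 a, ∀ y ∈ 𝒜 b, ∀ z ∈ 𝒜 c,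
      mul (mul x y) z = mul x (mul y z))
    (hLeib : ∀ a b c : G, ∀ x ∈ 𝒜 a, ∀ y ∈ 𝒜 b, ∀ z ∈ 𝒜 c,
      br (br x y) z = br x (br y z) + ε b c • br (br x z) y)
    (hcomp : ∀ a b c : G, ∀ x ∈ 𝒜 a, ∀ y ∈ 𝒜 b, ∀ z ∈ 𝒜 c,
      br (mul x y) z = mul x (br y z) + ε b c • mul (br x z) y) :
    -- ternary ε-Nambu identity for {x,y,z} := [x, y·z]:
    (∀ a b c d e : G, ∀ x ∈ 𝒜 a, ∀ y ∈ 𝒜 b, ∀ z ∈ 𝒜 c, ∀ t ∈ 𝒜 d, ∀ u ∈ 𝒜 e,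
      br (br x (mul y z)) (mul t u)
        = br x (mul y (br z (mul t u)))
          + ε c (d + e) • br x (mul (br y (mul t u)) z)
          + ε (b + c) (d + e) • br (br x (mul t u)) (mul y z)) ∧
    -- right ternary Leibniz rule {x·y,z,t} = x·{y,z,t} + ε(y,z+t){x,z,t}·y:
    (∀ a b c d : G, ∀ x ∈ 𝒜 a, ∀ y ∈ 𝒜 b, ∀ z ∈ 𝒜 c, ∀ t ∈ 𝒜 d,
      br (mul x y) (mul z t)
        = mul x (br y (mul z t)) + ε b (c + d) • mul (br x (mul z t)) y) :=
  stmt19_general 𝒜 ε hε3 mul br hgrm hLeib hcomp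
end
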